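/- arXiv:2508.17907 — 6 statements merged into one kernel-verified Lean document; each statement's English description precedes it below -/
import Mathlib

section
/- Fix integers m ≥ 1 and n ≥ 2, a point θ ∈ ℝ^m, and a distinguished expert j*. For each expert j let Q_j : ℝ^m → ℝ be a measurable probability density that is radially symmetric at θ. Define f(θ^s) = ∫_{(ℝ^m)^n} 𝟙[‖x_{j*} − θ^s‖ < ‖x_j − θ^s‖ for all j ≠ j*] · ∏_{j=1}^n Q_j(x_j) dx, the ex-ante probability that expert j* strictly wins the MSE-based competition with reference solution θ^s when all experts report independently from their densities. Then f is radially symmetric at θ: f(a) = f(b) whenever ‖a − θ‖ = ‖b − θ‖ (Lemma 1, symmetry part). -/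
open MeasureTheory

/-- The ex-ante probability that expert `jstar` strictly wins the MSE-based
competition with reference solution `θs`, when all experts report independently
from their densities `Q j`. -/
noncomputable def winProbAt (m n : ℕ) (jstar : Fin n)
    (Q : Fin n → EuclideanSpace ℝ (Fin m) → ℝ)
    (θs : EuclideanSpace ℝ (Fin m)) : ℝ :=
  ∫ x : Fin n → EuclideanSpace ℝ (Fin m),
    (if ∀ j : Fin n, j ≠ jstar → ‖x jstar - θs‖ < ‖x j - θs‖ then (1 : ℝ) else 0) *
      ∏ j : Fin n, Q j (x j)

/-- **Lemma 1 (symmetry part).** If all experts' densities are radially symmetric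
at `θ`, then the ex-ante win probability of expert `jstar`, as a function of the
reference solution, is radially symmetric at `θ`. -/
theorem winProb_radially_symmetric
    (m n : ℕ) (hm : 1 ≤ m) (hn : 2 ≤ n)
    (θ : EuclideanSpace ℝ (Fin m)) (jstar : Fin n)
    (Q : Fin n → EuclideanSpace ℝ (Fin m) → ℝ)
    (hQ_meas : ∀ j, Measurable (Q j))
    (hQ_nonneg : ∀ j x, 0 ≤ Q j x)
    (hQ_int : ∀ j, (∫ x : EuclideanSpace ℝ (Fin m), Q j x) = 1)
    (hQ_radial : ∀ j, ∀ x y : EuclideanSpace ℝ (Fin m),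
      ‖x - θ‖ = ‖y - θ‖ → Q j x = Q j y) :
    ∀ a b : EuclideanSpace ℝ (Fin m), ‖a - θ‖ = ‖b - θ‖ →
      winProbAt m n jstar Q a = winProbAt m n jstar Q b := by
  intro a b hab
  have E_def : True := trivial
  -- a reflection sending `a - θ` to `b - θ`
  set R : EuclideanSpace ℝ (Fin m) ≃ₗᵢ[ℝ] EuclideanSpace ℝ (Fin m) := Submodule.reflection (ℝ ∙ ((a - θ) - (b - θ)))ᗮ with hRdef
  have hR : R (a - θ) = b - θ := Submodule.reflection_sub hab
  -- per-coordinate measurable equivalence `x ↦ R (x - θ) + θ`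
  let e : EuclideanSpace ℝ (Fin m) ≃ᵐ EuclideanSpace ℝ (Fin m) :=
    { toFun := fun x => R (x - θ) + θ
      invFun := fun y => R.symm (y - θ) + θ
      left_inv := fun x => by simp
      right_inv := fun y => by simp
      measurable_toFun := by
        exact (R.continuous.measurable.comp (measurable_id.sub_const θ)).add_const θ
      measurable_invFun := by
        exact (R.symm.continuous.measurable.comp (measurable_id.sub_const θ)).add_const θ }
  have he : MeasurePreserving e volume volume := by
    have h1 : MeasurePreserving (fun x : EuclideanSpace ℝ (Fin m) => x - θ) volume volume :=
      measurePreserving_sub_right volume θ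
    have h2 : MeasurePreserving (R : EuclideanSpace ℝ (Fin m) → EuclideanSpace ℝ (Fin m)) volume volume :=
      R.measurePreserving
    have h3 : MeasurePreserving (fun x : EuclideanSpace ℝ (Fin m) => x + θ) volume volume :=
      measurePreserving_add_right volume θ
    exact (h3.comp h2).comp h1
  -- the product map
  let T : (Fin n → EuclideanSpace ℝ (Fin m)) ≃ᵐ (Fin n → EuclideanSpace ℝ (Fin m)) := MeasurableEquiv.piCongrRight fun _ => e
  have hT : MeasurePreserving T volume volume := by
    have := measurePreserving_pi (fun _ : Fin n => (volume : Measure (EuclideanSpace ℝ (Fin m))))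
      (fun _ : Fin n => (volume : Measure (EuclideanSpace ℝ (Fin m)))) (f := fun _ : Fin n => (e : EuclideanSpace ℝ (Fin m) → EuclideanSpace ℝ (Fin m)))
      (fun _ => he)
    rw [volume_pi]
    exact this
  -- key pointwise identities
  have hnorm1 : ∀ z : EuclideanSpace ℝ (Fin m), ‖e z - θ‖ = ‖z - θ‖ := by
    intro z
    have : e z - θ = R (z - θ) := by simp [e]
    rw [this, R.norm_map]
  have hnorm2 : ∀ z : EuclideanSpace ℝ (Fin m), ‖e z - b‖ = ‖z - a‖ := by
    intro z
    have : e z - b = R (z - a) := by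
      show R (z - θ) + θ - b = R (z - a)
      have h1 : z - a = (z - θ) - (a - θ) := by abel
      have h2 : R ((z - θ) - (a - θ)) = R (z - θ) - (b - θ) := by rw [map_sub, hR]
      rw [h1, h2]
      abel
    rw [this, R.norm_map]
  calc winProbAt m n jstar Q a
      = ∫ x : Fin n → EuclideanSpace ℝ (Fin m),
          (if ∀ j : Fin n, j ≠ jstar → ‖T x jstar - b‖ < ‖T x j - b‖ then (1 : ℝ) else 0) *
            ∏ j : Fin n, Q j (T x j) := by
        unfold winProbAt
        congr 1
        funext x
        have key : ∀ j : Fin n, ‖T x j - b‖ = ‖x j - a‖ := fun j => hnorm2 (x j)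
        have key1 : ∀ j : Fin n, ‖T x j - θ‖ = ‖x j - θ‖ := fun j => hnorm1 (x j)
        have hind : (∀ j : Fin n, j ≠ jstar → ‖x jstar - a‖ < ‖x j - a‖) ↔
            (∀ j : Fin n, j ≠ jstar → ‖T x jstar - b‖ < ‖T x j - b‖) := by
          refine forall_congr' fun j => imp_congr_right fun hj => ?_
          rw [key, key]
        rw [if_congr hind rfl rfl]
        congr 1
        refine Finset.prod_congr rfl fun j _ => ?_
        exact (hQ_radial j (T x j) (x j) (key1 j)).symm
    _ = winProbAt m n jstar Q b := by
        unfold winProbAt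
        exact hT.integral_comp' fun y =>
          (if ∀ j : Fin n, j ≠ jstar → ‖y jstar - b‖ < ‖y j - b‖ then (1 : ℝ) else 0) *
            ∏ j : Fin n, Q j (y j)
end

section
/- Fix integers m ≥ 2 and n ≥ 2, a point θ ∈ ℝ^m, and a distinguished expert j*. For each expert j let Q_j : ℝ^m → ℝ be a continuous, everywhere strictly positive probability density that is radially symmetric at θ, and suppose Q_{j*} satisfies the strict RMLRP with respect to Q_j at θ for every j ≠ j*. Define f(θ^s) = ∫_{(ℝ^m)^n} 𝟙[‖x_{j*} − θ^s‖ < ‖x_j − θ^s‖ for all j ≠ j*] · ∏_{j=1}^n Q_j(x_j) dx. Then f is strictly radially decreasing from θ: for all a, b ∈ ℝ^m with ‖a − θ‖ < ‖b − θ‖ one has f(a) > f(b) (Lemma 1, strict radial decrease part: the best expert's win probability strictly decreases as the reference solution moves radially away from the ground truth). -/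
open MeasureTheory

section WinProbAux

variable {m n : ℕ}

private lemma normSqLt {E : Type*} [NormedAddCommGroup E] [InnerProductSpace ℝ E]
    (θ a b x y : E) (lam : ℝ) (hlam : 1 < lam) (hb : b - θ = lam • (a - θ))
    (h1 : ‖x - a‖ < ‖y - a‖) (h2 : ‖y - b‖ < ‖x - b‖) : ‖x - θ‖ < ‖y - θ‖ := by
  set u := x - θ with hu
  set v := y - θ with hv
  set c := a - θ with hc
  have e1 : x - a = u - c := by rw [hu, hc]; abel
  have e2 : y - a = v - c := by rw [hv, hc]; abel
  have e3 : x - b = u - lam • c := by rw [hu, hc, ← hb]; abel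
  have e4 : y - b = v - lam • c := by rw [hv, hc, ← hb]; abel
  have h1' : ‖u - c‖ ^ 2 < ‖v - c‖ ^ 2 := by
    rw [← e1, ← e2]; exact pow_lt_pow_left₀ h1 (norm_nonneg _) (two_ne_zero)
  have h2' : ‖v - lam • c‖ ^ 2 < ‖u - lam • c‖ ^ 2 := by
    rw [← e3, ← e4]; exact pow_lt_pow_left₀ h2 (norm_nonneg _) (two_ne_zero)
  rw [norm_sub_sq_real u c, norm_sub_sq_real v c] at h1'
  rw [norm_sub_sq_real v (lam • c), norm_sub_sq_real u (lam • c),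
    real_inner_smul_right, real_inner_smul_right] at h2'
  have hgoal : ‖u‖ ^ 2 < ‖v‖ ^ 2 := by nlinarith [h1', h2']
  nlinarith [norm_nonneg u, norm_nonneg v, hgoal]

private lemma winChar (jstar : Fin n) (c : EuclideanSpace ℝ (Fin m))
    (p : Fin n → EuclideanSpace ℝ (Fin m)) (ic : Fin n)
    (hic : ∀ k, k ≠ ic → ‖p ic - c‖ < ‖p k - c‖) (π : Equiv.Perm (Fin n)) :
    (∀ j, j ≠ jstar → ‖p (π jstar) - c‖ < ‖p (π j) - c‖) ↔ π jstar = ic := by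
  constructor
  · intro h
    by_contra hne
    have hj : π.symm ic ≠ jstar := fun hE => hne (by rw [← hE, Equiv.apply_symm_apply])
    have h1 := h _ hj
    rw [Equiv.apply_symm_apply] at h1
    exact absurd h1 (not_lt.mpr (le_of_lt (hic _ hne)))
  · intro h j hj
    rw [h]
    exact hic _ (fun hE => hj (π.injective (hE.trans h.symm)))

private lemma discrete_pos (θ : EuclideanSpace ℝ (Fin m)) (jstar : Fin n)
    (Q : Fin n → EuclideanSpace ℝ (Fin m) → ℝ)
    (hQ_pos : ∀ j x, 0 < Q j x)
    (hQ_rmlrp : ∀ j : Fin n, j ≠ jstar → ∀ x y : EuclideanSpace ℝ (Fin m),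
      ‖x - θ‖ < ‖y - θ‖ → Q jstar y * Q j x < Q jstar x * Q j y)
    (a b : EuclideanSpace ℝ (Fin m))
    (key : ∀ x y : EuclideanSpace ℝ (Fin m),
      ‖x - a‖ < ‖y - a‖ → ‖y - b‖ < ‖x - b‖ → ‖x - θ‖ < ‖y - θ‖)
    (p : Fin n → EuclideanSpace ℝ (Fin m)) (ia ib : Fin n)
    (hia : ∀ k, k ≠ ia → ‖p ia - a‖ < ‖p k - a‖)
    (hib : ∀ k, k ≠ ib → ‖p ib - b‖ < ‖p k - b‖)
    (hne : ia ≠ ib) :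
    0 < ∑ π : Equiv.Perm (Fin n),
      ((if ∀ j, j ≠ jstar → ‖p (π jstar) - a‖ < ‖p (π j) - a‖ then (1:ℝ) else 0)
        - (if ∀ j, j ≠ jstar → ‖p (π jstar) - b‖ < ‖p (π j) - b‖ then (1:ℝ) else 0))
        * ∏ j, Q j (p (π j)) := by
  classical
  have hθ : ‖p ia - θ‖ < ‖p ib - θ‖ := key _ _ (hia ib (Ne.symm hne)) (hib ia hne)
  have hrw : ∀ π : Equiv.Perm (Fin n),
      ((if ∀ j, j ≠ jstar → ‖p (π jstar) - a‖ < ‖p (π j) - a‖ then (1:ℝ) else 0)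
        - (if ∀ j, j ≠ jstar → ‖p (π jstar) - b‖ < ‖p (π j) - b‖ then (1:ℝ) else 0))
        * ∏ j, Q j (p (π j))
      = (if π jstar = ia then ∏ j, Q j (p (π j)) else 0)
        - (if π jstar = ib then ∏ j, Q j (p (π j)) else 0) := by
    intro π
    rw [if_congr (winChar jstar a p ia hia π) rfl rfl,
      if_congr (winChar jstar b p ib hib π) rfl rfl]
    by_cases h1 : π jstar = ia <;> by_cases h2 : π jstar = ib <;>
      simp [h1, h2, hne, Ne.symm hne]
  rw [Finset.sum_congr rfl (fun π _ => hrw π), Finset.sum_sub_distrib]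
  rw [← Finset.sum_filter, ← Finset.sum_filter]
  rw [sub_pos]
  have key2 : ∀ π ∈ Finset.univ.filter (fun π : Equiv.Perm (Fin n) => π jstar = ib),
      (∏ j, Q j (p (π j))) < ∏ j, Q j (p ((π.trans (Equiv.swap ia ib)) j)) := by
    intro π hπB
    have hπ : π jstar = ib := (Finset.mem_filter.mp hπB).2
    set j1 := π.symm ia with hj1def
    have hπj1 : π j1 = ia := Equiv.apply_symm_apply _ _
    have hj1 : j1 ≠ jstar := by
      intro h
      apply hne
      rw [← hπj1, h, hπ]
    set f : Fin n → ℝ := fun j => Q j (p (π j)) with hf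
    set g : Fin n → ℝ := fun j => Q j (p ((π.trans (Equiv.swap ia ib)) j)) with hg
    have hrest : ∀ j, j ≠ jstar → j ≠ j1 → g j = f j := by
      intro j hjs hjj1
      have h1 : π j ≠ ia := fun hE => hjj1 (π.injective (hE.trans hπj1.symm))
      have h2 : π j ≠ ib := fun hE => hjs (π.injective (hE.trans hπ.symm))
      simp only [hg, hf, Equiv.trans_apply]
      rw [Equiv.swap_apply_of_ne_of_ne h1 h2]
    have hj1mem : j1 ∈ Finset.univ.erase jstar := Finset.mem_erase.mpr ⟨hj1, Finset.mem_univ _⟩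
    have hsplit : ∀ h : Fin n → ℝ, ∏ j, h j
        = h jstar * (h j1 * ∏ j ∈ (Finset.univ.erase jstar).erase j1, h j) := by
      intro h
      rw [← Finset.mul_prod_erase Finset.univ h (Finset.mem_univ jstar),
        ← Finset.mul_prod_erase _ h hj1mem]
    have hR : (0:ℝ) < ∏ j ∈ (Finset.univ.erase jstar).erase j1, f j :=
      Finset.prod_pos (fun j _ => hQ_pos _ _)
    have hRR : ∏ j ∈ (Finset.univ.erase jstar).erase j1, g j
        = ∏ j ∈ (Finset.univ.erase jstar).erase j1, f j := by
      apply Finset.prod_congr rfl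
      intro j hj
      have h1 := Finset.mem_erase.mp hj
      have h2 := Finset.mem_erase.mp h1.2
      exact hrest j h2.1 h1.1
    rw [hsplit f, hsplit g, hRR]
    have hfj : f jstar = Q jstar (p ib) := by simp only [hf, hπ]
    have hfj1 : f j1 = Q j1 (p ia) := by simp only [hf, hπj1]
    have hgj : g jstar = Q jstar (p ia) := by
      simp only [hg, Equiv.trans_apply, hπ, Equiv.swap_apply_right]
    have hgj1 : g j1 = Q j1 (p ib) := by
      simp only [hg, Equiv.trans_apply, hπj1, Equiv.swap_apply_left]
    rw [hfj, hfj1, hgj, hgj1, ← mul_assoc, ← mul_assoc]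
    exact mul_lt_mul_of_pos_right (hQ_rmlrp j1 hj1 (p ia) (p ib) hθ) hR
  calc ∑ π ∈ Finset.univ.filter (fun π : Equiv.Perm (Fin n) => π jstar = ib),
        ∏ j, Q j (p (π j))
      < ∑ π ∈ Finset.univ.filter (fun π : Equiv.Perm (Fin n) => π jstar = ib),
        ∏ j, Q j (p ((π.trans (Equiv.swap ia ib)) j)) := by
        apply Finset.sum_lt_sum_of_nonempty
        · exact ⟨Equiv.swap jstar ib, Finset.mem_filter.mpr ⟨Finset.mem_univ _,
            Equiv.swap_apply_left _ _⟩⟩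
        · exact key2
    _ = ∑ π ∈ Finset.univ.filter (fun π : Equiv.Perm (Fin n) => π jstar = ia),
        ∏ j, Q j (p (π j)) := by
        apply Finset.sum_nbij' (fun π => π.trans (Equiv.swap ia ib))
          (fun π => π.trans (Equiv.swap ia ib))
        · intro π hπ
          have h := (Finset.mem_filter.mp hπ).2
          refine Finset.mem_filter.mpr ⟨Finset.mem_univ _, ?_⟩
          simp [Equiv.trans_apply, h, Equiv.swap_apply_right]
        · intro π hπ
          have h := (Finset.mem_filter.mp hπ).2
          refine Finset.mem_filter.mpr ⟨Finset.mem_univ _, ?_⟩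
          simp [Equiv.trans_apply, h, Equiv.swap_apply_left]
        · intro π _
          ext j
          simp [Equiv.trans_apply, Equiv.swap_apply_self]
        · intro π _
          ext j
          simp [Equiv.trans_apply, Equiv.swap_apply_self]
        · intro π _
          rfl

private lemma discrete_nonneg (θ : EuclideanSpace ℝ (Fin m)) (jstar : Fin n)
    (Q : Fin n → EuclideanSpace ℝ (Fin m) → ℝ)
    (hQ_pos : ∀ j x, 0 < Q j x)
    (hQ_rmlrp : ∀ j : Fin n, j ≠ jstar → ∀ x y : EuclideanSpace ℝ (Fin m),
      ‖x - θ‖ < ‖y - θ‖ → Q jstar y * Q j x < Q jstar x * Q j y)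
    (a b : EuclideanSpace ℝ (Fin m))
    (key : ∀ x y : EuclideanSpace ℝ (Fin m),
      ‖x - a‖ < ‖y - a‖ → ‖y - b‖ < ‖x - b‖ → ‖x - θ‖ < ‖y - θ‖)
    (p : Fin n → EuclideanSpace ℝ (Fin m))
    (hda : ∀ k l, k ≠ l → ‖p k - a‖ ≠ ‖p l - a‖)
    (hdb : ∀ k l, k ≠ l → ‖p k - b‖ ≠ ‖p l - b‖) :
    0 ≤ ∑ π : Equiv.Perm (Fin n),
      ((if ∀ j, j ≠ jstar → ‖p (π jstar) - a‖ < ‖p (π j) - a‖ then (1:ℝ) else 0)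
        - (if ∀ j, j ≠ jstar → ‖p (π jstar) - b‖ < ‖p (π j) - b‖ then (1:ℝ) else 0))
        * ∏ j, Q j (p (π j)) := by
  classical
  obtain ⟨ia, -, hiale⟩ := Finset.exists_min_image Finset.univ (fun k => ‖p k - a‖)
    ⟨jstar, Finset.mem_univ _⟩
  obtain ⟨ib, -, hible⟩ := Finset.exists_min_image Finset.univ (fun k => ‖p k - b‖)
    ⟨jstar, Finset.mem_univ _⟩
  have hia : ∀ k, k ≠ ia → ‖p ia - a‖ < ‖p k - a‖ :=
    fun k hk => lt_of_le_of_ne (hiale k (Finset.mem_univ k)) (hda ia k (Ne.symm hk))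
  have hib : ∀ k, k ≠ ib → ‖p ib - b‖ < ‖p k - b‖ :=
    fun k hk => lt_of_le_of_ne (hible k (Finset.mem_univ k)) (hdb ib k (Ne.symm hk))
  rcases eq_or_ne ia ib with rfl | hne
  · apply le_of_eq
    symm
    apply Finset.sum_eq_zero
    intro π _
    rw [if_congr (winChar jstar a p ia hia π) rfl rfl,
      if_congr (winChar jstar b p ia hib π) rfl rfl]
    ring
  · exact le_of_lt (discrete_pos θ jstar Q hQ_pos hQ_rmlrp a b key p ia ib hia hib hne)

private lemma null_update (k : Fin n) (S : Set (Fin n → EuclideanSpace ℝ (Fin m)))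
    (hS : MeasurableSet S)
    (hslice : ∀ x : Fin n → EuclideanSpace ℝ (Fin m),
      volume {y : EuclideanSpace ℝ (Fin m) | Function.update x k y ∈ S} = 0) :
    volume S = 0 := by
  classical
  haveI hU : Unique {i : Fin n // ¬ i ≠ k} :=
    ⟨⟨⟨k, by simp⟩⟩, by rintro ⟨i, hi⟩; exact Subtype.ext (not_not.mp hi)⟩
  let e1 := MeasurableEquiv.piEquivPiSubtypeProd (fun _ : Fin n => EuclideanSpace ℝ (Fin m))
    (fun i => i ≠ k)
  have hp1 : MeasurePreserving e1 volume volume :=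
    volume_preserving_piEquivPiSubtypeProd _ _
  set T := e1.symm ⁻¹' S with hTdef
  have hTmeas : MeasurableSet T := e1.symm.measurable hS
  have hST : S = e1 ⁻¹' T := by
    rw [hTdef, ← Set.preimage_comp]
    ext x
    simp
  rw [hST, hp1.measure_preimage hTmeas.nullMeasurableSet]
  rw [Measure.volume_eq_prod, Measure.measure_prod_null hTmeas]
  refine Filter.Eventually.of_forall (fun z => ?_)
  set x₀ : Fin n → EuclideanSpace ℝ (Fin m) := e1.symm (z, fun _ => 0) with hx₀
  have hcomp : ∀ w : (∀ _ : {i : Fin n // ¬ i ≠ k}, EuclideanSpace ℝ (Fin m)),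
      e1.symm (z, w) = Function.update x₀ k (w default) := by
    intro w
    funext i
    by_cases hi : i = k
    · subst hi
      have h1 : e1.symm (z, w) i = w ⟨i, by simp⟩ := by
        simp [e1, MeasurableEquiv.piEquivPiSubtypeProd, Equiv.piEquivPiSubtypeProd_symm_apply]
      rw [h1, Function.update_self]
      exact congrArg w (Subsingleton.elim _ _)
    · have h1 : e1.symm (z, w) i = z ⟨i, hi⟩ := by
        simp [e1, MeasurableEquiv.piEquivPiSubtypeProd, Equiv.piEquivPiSubtypeProd_symm_apply, hi]
      rw [h1, Function.update_of_ne hi, hx₀]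
      simp [e1, MeasurableEquiv.piEquivPiSubtypeProd, Equiv.piEquivPiSubtypeProd_symm_apply, hi]
  have hCmeas : MeasurableSet {y : EuclideanSpace ℝ (Fin m) | Function.update x₀ k y ∈ S} :=
    (measurable_update x₀) hS
  have hset : Prod.mk z ⁻¹' T =
      (⇑(MeasurableEquiv.piUnique (fun _ : {i : Fin n // ¬ i ≠ k} => EuclideanSpace ℝ (Fin m))))
        ⁻¹' {y : EuclideanSpace ℝ (Fin m) | Function.update x₀ k y ∈ S} := by
    ext w
    simp only [Set.mem_preimage, hTdef, Set.mem_setOf_eq]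
    rw [hcomp w]
    rfl
  show volume (Prod.mk z ⁻¹' T) = 0
  rw [hset, volume_pi,
    (measurePreserving_piUnique
      (fun _ : {i : Fin n // ¬ i ≠ k} =>
        (volume : Measure (EuclideanSpace ℝ (Fin m))))).measure_preimage
      hCmeas.nullMeasurableSet]
  exact hslice x₀

private lemma ae_distinct (hm : 2 ≤ m) (c : EuclideanSpace ℝ (Fin m)) :
    ∀ᵐ x : Fin n → EuclideanSpace ℝ (Fin m),
      ∀ k l : Fin n, k ≠ l → ‖x k - c‖ ≠ ‖x l - c‖ := by
  haveI : Nonempty (Fin m) := ⟨⟨0, by omega⟩⟩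
  haveI : Nontrivial (EuclideanSpace ℝ (Fin m)) := by infer_instance
  rw [ae_all_iff]
  intro k
  rw [ae_all_iff]
  intro l
  rcases eq_or_ne k l with rfl | hkl
  · exact Filter.Eventually.of_forall (fun x h => absurd rfl h)
  · have hnull : volume {x : Fin n → EuclideanSpace ℝ (Fin m) | ‖x k - c‖ = ‖x l - c‖} = 0 := by
      apply null_update k
      · exact measurableSet_eq_fun
          (((continuous_apply k).sub continuous_const).norm.measurable)
          (((continuous_apply l).sub continuous_const).norm.measurable)
      · intro x
        have heq : {y : EuclideanSpace ℝ (Fin m) |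
            Function.update x k y ∈ {x : Fin n → EuclideanSpace ℝ (Fin m) |
              ‖x k - c‖ = ‖x l - c‖}}
            = Metric.sphere c ‖x l - c‖ := by
          ext y
          simp only [Set.mem_setOf_eq, Function.update_self, Function.update_of_ne (Ne.symm hkl),
            mem_sphere_iff_norm]
        rw [heq]
        exact Measure.addHaar_sphere volume c _
    rw [ae_iff]
    convert hnull using 2
    ext x
    simp [hkl]

private lemma core (hm : 2 ≤ m) (hn : 2 ≤ n)
    (θ : EuclideanSpace ℝ (Fin m)) (jstar : Fin n)
    (Q : Fin n → EuclideanSpace ℝ (Fin m) → ℝ)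
    (hQ_pos : ∀ j x, 0 < Q j x)
    (hQ_int : ∀ j, (∫ x : EuclideanSpace ℝ (Fin m), Q j x) = 1)
    (hQ_rmlrp : ∀ j : Fin n, j ≠ jstar → ∀ x y : EuclideanSpace ℝ (Fin m),
      ‖x - θ‖ < ‖y - θ‖ → Q jstar y * Q j x < Q jstar x * Q j y)
    (a b : EuclideanSpace ℝ (Fin m)) (hab : a ≠ b)
    (key : ∀ x y : EuclideanSpace ℝ (Fin m),
      ‖x - a‖ < ‖y - a‖ → ‖y - b‖ < ‖x - b‖ → ‖x - θ‖ < ‖y - θ‖) :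
    winProbAt m n jstar Q b < winProbAt m n jstar Q a := by
  classical
  have hQint : ∀ j, Integrable (Q j) := by
    intro j
    by_contra h
    exact one_ne_zero ((hQ_int j).symm.trans (integral_undef h))
  set P : (Fin n → EuclideanSpace ℝ (Fin m)) → ℝ := fun x => ∏ j, Q j (x j) with hP
  have hPint : Integrable P := Integrable.fintype_prod (fun j => hQint j)
  set W : EuclideanSpace ℝ (Fin m) → Set (Fin n → EuclideanSpace ℝ (Fin m)) :=
    fun c => {x | ∀ j, j ≠ jstar → ‖x jstar - c‖ < ‖x j - c‖} with hW
  have hWmeas : ∀ c, MeasurableSet (W c) := by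
    intro c
    have hWi : W c = ⋂ j, {x : Fin n → EuclideanSpace ℝ (Fin m) |
        j ≠ jstar → ‖x jstar - c‖ < ‖x j - c‖} := by
      ext x; simp [hW, Set.mem_iInter]
    rw [hWi]
    refine MeasurableSet.iInter (fun j => ?_)
    rcases eq_or_ne j jstar with rfl | hj
    · convert MeasurableSet.univ
      ext x; simp
    · have hset : {x : Fin n → EuclideanSpace ℝ (Fin m) | j ≠ jstar →
          ‖x jstar - c‖ < ‖x j - c‖} = {x | ‖x jstar - c‖ < ‖x j - c‖} := by
        ext x; simp [hj]
      rw [hset]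
      exact (isOpen_lt (((continuous_apply jstar).sub continuous_const).norm)
        (((continuous_apply j).sub continuous_const).norm)).measurableSet
  have hind : ∀ (c : EuclideanSpace ℝ (Fin m)) x,
      (if (∀ j, j ≠ jstar → ‖x jstar - c‖ < ‖x j - c‖) then (1:ℝ) else 0) * P x
        = Set.indicator (W c) P x := by
    intro c x
    by_cases h : ∀ j, j ≠ jstar → ‖x jstar - c‖ < ‖x j - c‖
    · rw [if_pos h, Set.indicator_of_mem (show x ∈ W c from by rw [hW]; exact h), one_mul]
    · rw [if_neg h, Set.indicator_of_notMem (show x ∉ W c from by rw [hW]; exact h), zero_mul]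
  have hwin : ∀ c, winProbAt m n jstar Q c = ∫ x, Set.indicator (W c) P x := by
    intro c
    unfold winProbAt
    exact integral_congr_ae (Filter.Eventually.of_forall (hind c))
  have hIc : ∀ c, Integrable (Set.indicator (W c) P) := fun c => hPint.indicator (hWmeas c)
  set D : (Fin n → EuclideanSpace ℝ (Fin m)) → ℝ :=
    fun x => Set.indicator (W a) P x - Set.indicator (W b) P x with hD
  have hDint : Integrable D := ((hIc a).sub (hIc b))
  have hTco : ∀ (σ : Equiv.Perm (Fin n)) (x : Fin n → EuclideanSpace ℝ (Fin m)) (j : Fin n),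
      (MeasurableEquiv.piCongrLeft (fun _ => EuclideanSpace ℝ (Fin m)) σ) x j
        = x (σ.symm j) := by
    intro σ x j
    conv_lhs => rw [show j = σ (σ.symm j) from (Equiv.apply_symm_apply σ j).symm]
    exact MeasurableEquiv.piCongrLeft_apply_apply (β := fun _ => EuclideanSpace ℝ (Fin m)) σ x (σ.symm j)
  set F : Equiv.Perm (Fin n) → (Fin n → EuclideanSpace ℝ (Fin m)) → ℝ := fun π x =>
    ((if ∀ j, j ≠ jstar → ‖x (π jstar) - a‖ < ‖x (π j) - a‖ then (1:ℝ) else 0)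
      - (if ∀ j, j ≠ jstar → ‖x (π jstar) - b‖ < ‖x (π j) - b‖ then (1:ℝ) else 0))
      * ∏ j, Q j (x (π j)) with hF
  have hDT : ∀ (c : EuclideanSpace ℝ (Fin m)) (σ : Equiv.Perm (Fin n)) x,
      Set.indicator (W c) P
        ((MeasurableEquiv.piCongrLeft (fun _ => EuclideanSpace ℝ (Fin m)) σ) x)
      = (if (∀ j, j ≠ jstar → ‖x (σ.symm jstar) - c‖ < ‖x (σ.symm j) - c‖) then (1:ℝ) else 0)
        * ∏ j, Q j (x (σ.symm j)) := by
    intro c σ x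
    have hPT : P ((MeasurableEquiv.piCongrLeft (fun _ => EuclideanSpace ℝ (Fin m)) σ) x)
        = ∏ j, Q j (x (σ.symm j)) :=
      Finset.prod_congr rfl (fun j _ => by rw [hTco σ x j])
    by_cases h : ∀ j, j ≠ jstar → ‖x (σ.symm jstar) - c‖ < ‖x (σ.symm j) - c‖
    · rw [if_pos h, one_mul,
        Set.indicator_of_mem (show _ ∈ W c from by
          rw [hW]
          intro j hj
          rw [hTco σ x j, hTco σ x jstar]
          exact h j hj), hPT]
    · rw [if_neg h, zero_mul,
        Set.indicator_of_notMem (show _ ∉ W c from by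
          rw [hW]
          intro hmem
          exact h (fun j hj => by
            have hmj := hmem j hj
            rwa [hTco σ x j, hTco σ x jstar] at hmj))]
  have hFD : ∀ π : Equiv.Perm (Fin n), F π = (fun x => D
      ((MeasurableEquiv.piCongrLeft (fun _ => EuclideanSpace ℝ (Fin m)) π.symm) x)) := by
    intro π
    funext x
    simp only [hD]
    rw [hDT a π.symm x, hDT b π.symm x]
    simp only [hF, Equiv.symm_symm]
    ring
  have hFint : ∀ π : Equiv.Perm (Fin n), Integrable (F π) := by
    intro π
    rw [hFD π]
    exact ((volume_measurePreserving_piCongrLeft (fun _ => EuclideanSpace ℝ (Fin m))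
      π.symm).integrable_comp_emb (MeasurableEquiv.measurableEmbedding _)).mpr hDint
  have hFeq : ∀ π : Equiv.Perm (Fin n), ∫ x, F π x = ∫ x, D x := by
    intro π
    rw [hFD π]
    exact (volume_measurePreserving_piCongrLeft (fun _ => EuclideanSpace ℝ (Fin m))
      π.symm).integral_comp' D
  set g : (Fin n → EuclideanSpace ℝ (Fin m)) → ℝ := fun x => ∑ π : Equiv.Perm (Fin n), F π x
    with hg
  have hgint : Integrable g := integrable_finset_sum _ (fun π _ => hFint π)
  have hgsum : ∫ x, g x = (Fintype.card (Equiv.Perm (Fin n)) : ℝ) * ∫ x, D x := by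
    simp only [hg]
    rw [integral_finset_sum _ (fun π _ => hFint π),
      Finset.sum_congr rfl (fun π _ => hFeq π), Finset.sum_const, Finset.card_univ,
      nsmul_eq_mul]
  have hg0 : 0 ≤ᵐ[volume] g := by
    filter_upwards [ae_distinct hm a, ae_distinct hm b] with x hxa hxb
    exact discrete_nonneg θ jstar Q hQ_pos hQ_rmlrp a b key x hxa hxb
  have hbapos : (0:ℝ) < ‖b - a‖ := norm_pos_iff.mpr (sub_ne_zero.mpr (Ne.symm hab))
  set δ : ℝ := ‖b - a‖ / 5 with hδdef
  have hδ : 0 < δ := by rw [hδdef]; linarith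
  have h5 : ‖b - a‖ = 5 * δ := by rw [hδdef]; ring
  set k1 : Fin n := ⟨0, by omega⟩ with hk1
  set k2 : Fin n := ⟨1, by omega⟩ with hk2
  have hk12 : k1 ≠ k2 := by simp [hk1, hk2, Fin.ext_iff]
  set w : Fin n → EuclideanSpace ℝ (Fin m) := fun j =>
    if j = k1 then a else if j = k2 then b else a + (10:ℝ) • (b - a) with hw'
  set V : Set (Fin n → EuclideanSpace ℝ (Fin m)) :=
    Set.univ.pi (fun j => Metric.ball (w j) δ) with hV
  have hVsub : V ⊆ Function.support g := by
    intro x hx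
    have hxj : ∀ j, ‖x j - w j‖ < δ := by
      intro j
      have hj := hx j (Set.mem_univ j)
      rwa [Metric.mem_ball, dist_eq_norm] at hj
    have htri : ∀ (j : Fin n) (c : EuclideanSpace ℝ (Fin m)),
        ‖w j - c‖ - δ < ‖x j - c‖ := by
      intro j c
      have h1 := dist_triangle (w j) (x j) c
      rw [dist_eq_norm, dist_eq_norm, dist_eq_norm] at h1
      have h2 : ‖w j - x j‖ < δ := by rw [norm_sub_rev]; exact hxj j
      linarith
    have hwk1 : w k1 = a := by simp [hw']
    have hwk2 : w k2 = b := by simp [hw', Ne.symm hk12]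
    have hfar_a : ∀ j, j ≠ k1 → j ≠ k2 → ‖w j - a‖ = 50 * δ := by
      intro j hj1 hj2
      simp only [hw', hj1, hj2, if_false]
      rw [add_sub_cancel_left, norm_smul, Real.norm_eq_abs,
        show |(10:ℝ)| = 10 from abs_of_pos (by norm_num), h5]
      ring
    have hfar_b : ∀ j, j ≠ k1 → j ≠ k2 → ‖w j - b‖ = 45 * δ := by
      intro j hj1 hj2
      simp only [hw', hj1, hj2, if_false]
      rw [show a + (10:ℝ) • (b - a) - b = (9:ℝ) • (b - a) from by module,
        norm_smul, Real.norm_eq_abs,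
        show |(9:ℝ)| = 9 from abs_of_pos (by norm_num), h5]
      ring
    have hia : ∀ k, k ≠ k1 → ‖x k1 - a‖ < ‖x k - a‖ := by
      intro k hk
      have hxa : ‖x k1 - a‖ < δ := by
        have h := hxj k1
        rwa [hwk1] at h
      rcases eq_or_ne k k2 with rfl | hkk2
      · have h := htri k2 a
        rw [hwk2, h5] at h
        linarith
      · have h := htri k a
        rw [hfar_a k hk hkk2] at h
        linarith
    have hib : ∀ k, k ≠ k2 → ‖x k2 - b‖ < ‖x k - b‖ := by
      intro k hk
      have hxb : ‖x k2 - b‖ < δ := by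
        have h := hxj k2
        rwa [hwk2] at h
      rcases eq_or_ne k k1 with rfl | hkk1
      · have h := htri k1 b
        rw [hwk1, norm_sub_rev, h5] at h
        linarith
      · have h := htri k b
        rw [hfar_b k hkk1 hk] at h
        linarith
    have hgx : 0 < g x :=
      discrete_pos θ jstar Q hQ_pos hQ_rmlrp a b key x k1 k2 hia hib hk12
    exact Function.mem_support.mpr (ne_of_gt hgx)
  have hVpos : 0 < volume V := by
    rw [hV, volume_pi_pi]
    rw [CanonicallyOrderedAdd.prod_pos]
    exact fun j _ => Metric.measure_ball_pos volume _ hδ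
  have hsupp : 0 < volume (Function.support g) := lt_of_lt_of_le hVpos (measure_mono hVsub)
  have hgpos : 0 < ∫ x, g x := (integral_pos_iff_support_of_nonneg_ae hg0 hgint).mpr hsupp
  rw [hgsum] at hgpos
  have hcard : (0:ℝ) < (Fintype.card (Equiv.Perm (Fin n)) : ℝ) := by
    exact_mod_cast Fintype.card_pos
  have hDpos : 0 < ∫ x, D x := by
    rcases mul_pos_iff.mp hgpos with ⟨_, h⟩ | ⟨h1, _⟩
    · exact h
    · exact absurd h1 (not_lt.mpr hcard.le)
  have hsub : ∫ x, D x = winProbAt m n jstar Q a - winProbAt m n jstar Q b := by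
    simp only [hD]
    rw [integral_sub (hIc a) (hIc b), hwin a, hwin b]
  rw [hsub] at hDpos
  linarith

end WinProbAux

/-- **Lemma 1 (strict radial decrease part).** If all experts' densities are
continuous, everywhere strictly positive and radially symmetric at `θ`, and the
best expert `jstar` satisfies the strict radial MLRP at `θ` with respect to every
other expert, then the best expert's ex-ante win probability strictly decreases as
the reference solution moves radially away from the ground truth `θ`. -/
theorem winProb_strictly_radially_decreasing
    (m n : ℕ) (hm : 2 ≤ m) (hn : 2 ≤ n)
    (θ : EuclideanSpace ℝ (Fin m)) (jstar : Fin n)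
    (Q : Fin n → EuclideanSpace ℝ (Fin m) → ℝ)
    (hQ_cont : ∀ j, Continuous (Q j))
    (hQ_pos : ∀ j x, 0 < Q j x)
    (hQ_int : ∀ j, (∫ x : EuclideanSpace ℝ (Fin m), Q j x) = 1)
    (hQ_radial : ∀ j, ∀ x y : EuclideanSpace ℝ (Fin m),
      ‖x - θ‖ = ‖y - θ‖ → Q j x = Q j y)
    (hQ_rmlrp : ∀ j : Fin n, j ≠ jstar → ∀ x y : EuclideanSpace ℝ (Fin m),
      ‖x - θ‖ < ‖y - θ‖ → Q jstar y * Q j x < Q jstar x * Q j y) :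
    ∀ a b : EuclideanSpace ℝ (Fin m), ‖a - θ‖ < ‖b - θ‖ →
      winProbAt m n jstar Q b < winProbAt m n jstar Q a := by
  intro a b hlt
  rcases eq_or_ne a θ with h | haθ
  · subst h
    refine core hm hn a jstar Q hQ_pos hQ_int hQ_rmlrp a b ?_ ?_
    · intro h
      rw [← h] at hlt
      exact lt_irrefl _ hlt
    · intro x y h1 _
      exact h1
  · have ht : 0 < ‖a - θ‖ := norm_pos_iff.mpr (sub_ne_zero.mpr haθ)
    set lam : ℝ := ‖b - θ‖ / ‖a - θ‖ with hlamdef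
    have hlam : 1 < lam := (one_lt_div ht).mpr hlt
    set b' : EuclideanSpace ℝ (Fin m) := θ + lam • (a - θ) with hb'def
    have hb'v : b' - θ = lam • (a - θ) := by rw [hb'def, add_sub_cancel_left]
    have hnb' : ‖b' - θ‖ = ‖b - θ‖ := by
      rw [hb'v, norm_smul, Real.norm_eq_abs, abs_of_pos (lt_trans one_pos hlam), hlamdef]
      field_simp
    -- reflection step: winProbAt ... b = winProbAt ... b'
    have hrefl : winProbAt m n jstar Q b = winProbAt m n jstar Q b' := by
      set v : EuclideanSpace ℝ (Fin m) := b - θ with hv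
      set v' : EuclideanSpace ℝ (Fin m) := b' - θ with hv'
      have hnorm : ‖v'‖ = ‖v‖ := hnb'
      set ρ := Submodule.reflection (ℝ ∙ (v' - v))ᗮ with hρdef
      have hρ : ρ v' = v := Submodule.reflection_sub hnorm
      have hρ' : ρ v = v' := by
        have h := congrArg (fun z => ρ z) hρ
        rw [← h, hρdef, Submodule.reflection_reflection]
      set σ : EuclideanSpace ℝ (Fin m) → EuclideanSpace ℝ (Fin m) :=
        fun y => θ + ρ (y - θ) with hσdef
      have hσMP : MeasurePreserving σ volume volume := by
        have h1 : MeasurePreserving (fun y : EuclideanSpace ℝ (Fin m) => y - θ)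
            volume volume := measurePreserving_sub_right volume θ
        have h2 := (ρ.measurePreserving).comp h1
        exact (measurePreserving_add_left volume θ).comp h2
      have hσnorm : ∀ y, ‖σ y - θ‖ = ‖y - θ‖ := by
        intro y
        rw [hσdef]
        simp only [add_sub_cancel_left]
        exact ρ.norm_map _
      have hσb : ∀ y, ‖σ y - b‖ = ‖y - b'‖ := by
        intro y
        have h1 : σ y - b = ρ (y - θ) - v := by
          rw [hσdef, hv]; dsimp only; abel
        rw [h1, ← hρ, ← map_sub, ρ.norm_map]
        have h2 : y - θ - v' = y - b' := by rw [hv']; abel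
        rw [h2]
      set Sf : (Fin n → EuclideanSpace ℝ (Fin m)) → (Fin n → EuclideanSpace ℝ (Fin m)) :=
        fun x j => σ (x j) with hSdef
      have hSMP : MeasurePreserving Sf volume volume := by
        have h := measurePreserving_pi (fun _ : Fin n => (volume : Measure (EuclideanSpace ℝ (Fin m))))
          (fun _ => volume) (fun _ => hσMP)
        rw [volume_pi]
        exact h
      set fb : (Fin n → EuclideanSpace ℝ (Fin m)) → ℝ := fun x =>
        (if ∀ j : Fin n, j ≠ jstar → ‖x jstar - b‖ < ‖x j - b‖ then (1 : ℝ) else 0) *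
          ∏ j : Fin n, Q j (x j) with hfb
      have hPcont : Continuous (fun x : Fin n → EuclideanSpace ℝ (Fin m) =>
          ∏ j, Q j (x j)) :=
        continuous_finset_prod _ (fun j _ => (hQ_cont j).comp (continuous_apply j))
      have hWmeas : MeasurableSet {x : Fin n → EuclideanSpace ℝ (Fin m) |
          ∀ j, j ≠ jstar → ‖x jstar - b‖ < ‖x j - b‖} := by
        have hWi : {x : Fin n → EuclideanSpace ℝ (Fin m) |
            ∀ j, j ≠ jstar → ‖x jstar - b‖ < ‖x j - b‖}
            = ⋂ j, {x : Fin n → EuclideanSpace ℝ (Fin m) |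
              j ≠ jstar → ‖x jstar - b‖ < ‖x j - b‖} := by
          ext x; simp [Set.mem_iInter]
        rw [hWi]
        refine MeasurableSet.iInter (fun j => ?_)
        rcases eq_or_ne j jstar with rfl | hj
        · convert MeasurableSet.univ
          ext x; simp
        · have hset : {x : Fin n → EuclideanSpace ℝ (Fin m) | j ≠ jstar →
              ‖x jstar - b‖ < ‖x j - b‖} = {x | ‖x jstar - b‖ < ‖x j - b‖} := by
            ext x; simp [hj]
          rw [hset]
          exact (isOpen_lt (((continuous_apply jstar).sub continuous_const).norm)
            (((continuous_apply j).sub continuous_const).norm)).measurableSet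
      have hfbmeas : AEStronglyMeasurable fb (Measure.map Sf volume) := by
        rw [hSMP.map_eq]
        have hmeas : Measurable fb := by
          have h1 : fb = Set.indicator {x : Fin n → EuclideanSpace ℝ (Fin m) |
              ∀ j, j ≠ jstar → ‖x jstar - b‖ < ‖x j - b‖}
              (fun x => ∏ j, Q j (x j)) := by
            funext x
            by_cases h : ∀ j, j ≠ jstar → ‖x jstar - b‖ < ‖x j - b‖
            · rw [hfb]; simp only
              rw [if_pos h, Set.indicator_of_mem (show x ∈ {x : Fin n → EuclideanSpace ℝ (Fin m) |
                ∀ j, j ≠ jstar → ‖x jstar - b‖ < ‖x j - b‖} from h), one_mul]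
            · rw [hfb]; simp only
              rw [if_neg h, Set.indicator_of_notMem (show x ∉ {x : Fin n → EuclideanSpace ℝ (Fin m) |
                ∀ j, j ≠ jstar → ‖x jstar - b‖ < ‖x j - b‖} from h), zero_mul]
          rw [h1]
          exact hPcont.measurable.indicator hWmeas
        exact hmeas.aestronglyMeasurable
      have hcomp : ∀ x, fb (Sf x) =
          (if ∀ j : Fin n, j ≠ jstar → ‖x jstar - b'‖ < ‖x j - b'‖ then (1 : ℝ) else 0) *
            ∏ j : Fin n, Q j (x j) := by
        intro x
        have hQeq : ∏ j, Q j (σ (x j)) = ∏ j, Q j (x j) :=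
          Finset.prod_congr rfl (fun j _ => hQ_radial j _ _ (hσnorm (x j)))
        have hcond : (∀ j, j ≠ jstar → ‖σ (x jstar) - b‖ < ‖σ (x j) - b‖)
            ↔ (∀ j, j ≠ jstar → ‖x jstar - b'‖ < ‖x j - b'‖) := by
          refine forall_congr' (fun j => imp_congr_right (fun hj => ?_))
          rw [hσb, hσb]
        simp only [hfb, hSdef]
        rw [if_congr hcond rfl rfl, hQeq]
      unfold winProbAt
      calc ∫ x : Fin n → EuclideanSpace ℝ (Fin m),
            (if ∀ j : Fin n, j ≠ jstar → ‖x jstar - b‖ < ‖x j - b‖ then (1 : ℝ) else 0) *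
              ∏ j : Fin n, Q j (x j)
          = ∫ x, fb x := by rw [hfb]
        _ = ∫ x, fb x ∂(Measure.map Sf volume) := by rw [hSMP.map_eq]
        _ = ∫ x, fb (Sf x) := integral_map hSMP.aemeasurable hfbmeas
        _ = ∫ x : Fin n → EuclideanSpace ℝ (Fin m),
            (if ∀ j : Fin n, j ≠ jstar → ‖x jstar - b'‖ < ‖x j - b'‖ then (1 : ℝ) else 0) *
              ∏ j : Fin n, Q j (x j) :=
            integral_congr_ae (Filter.Eventually.of_forall hcomp)
    rw [hrefl]
    refine core hm hn θ jstar Q hQ_pos hQ_int hQ_rmlrp a b' ?_ ?_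
    · intro h
      apply ne_of_lt hlt
      rw [h, hnb']
    · intro x y h1 h2
      exact normSqLt θ a b' x y lam hlam hb'v h1 h2
end

section
/- Fix m ≥ 1 and θ ∈ ℝ^m. Let p, q : ℝ^m → ℝ be everywhere strictly positive functions such that p satisfies the strict RMLRP with respect to q at θ. Fix a unit vector e ∈ ℝ^m, ξ > 0, and set θ^s = θ + ξ·e. Then for all x, y ∈ ℝ^m with ‖x − θ^s‖ = ‖y − θ^s‖ and ‖x − θ‖ ≠ ‖y − θ‖, one has ( q(x)·p(y) − q(y)·p(x) ) · ⟨x − y, e⟩ > 0; and this product is ≥ 0 for all x, y with ‖x − θ^s‖ = ‖y − θ^s‖ (pointwise positivity of the antisymmetrized integrand in Step 4 of the proof of Lemma 1). -/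
open scoped RealInnerProductSpace

/-- **Step 4 of the proof of Lemma 1 (pointwise positivity of the antisymmetrized
integrand).** Let `p` satisfy the strict radial MLRP with respect to `q` at `θ`,
both everywhere positive, and let `θˢ = θ + ξ·e` with `e` a unit vector and `ξ > 0`.
Then for `x`, `y` equidistant from `θˢ` with `‖x − θ‖ ≠ ‖y − θ‖`,
`(q(x)p(y) − q(y)p(x))·⟪x − y, e⟫ > 0`; and this product is nonnegative for all
`x`, `y` equidistant from `θˢ`. -/
theorem antisymmetrized_integrand_positive
    (m : ℕ) (hm : 1 ≤ m)
    (θ : EuclideanSpace ℝ (Fin m))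
    (p q : EuclideanSpace ℝ (Fin m) → ℝ)
    (hp_pos : ∀ x, 0 < p x) (hq_pos : ∀ x, 0 < q x)
    (h_rmlrp : ∀ x y : EuclideanSpace ℝ (Fin m),
      ‖x - θ‖ < ‖y - θ‖ → p y * q x < p x * q y)
    (e : EuclideanSpace ℝ (Fin m)) (he : ‖e‖ = 1)
    (ξ : ℝ) (hξ : 0 < ξ)
    (θs : EuclideanSpace ℝ (Fin m)) (hθs : θs = θ + ξ • e) :
    (∀ x y : EuclideanSpace ℝ (Fin m), ‖x - θs‖ = ‖y - θs‖ → ‖x - θ‖ ≠ ‖y - θ‖ →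
      0 < (q x * p y - q y * p x) * ⟪x - y, e⟫) ∧
    (∀ x y : EuclideanSpace ℝ (Fin m), ‖x - θs‖ = ‖y - θs‖ →
      0 ≤ (q x * p y - q y * p x) * ⟪x - y, e⟫) := by
  have key : ∀ x y : EuclideanSpace ℝ (Fin m), ‖x - θs‖ = ‖y - θs‖ →
      ‖x - θ‖ ^ 2 - ‖y - θ‖ ^ 2 = 2 * ξ * ⟪x - y, e⟫ := by
    intro x y h
    have hx : x - θ = (x - θs) + ξ • e := by rw [hθs]; abel
    have hy : y - θ = (y - θs) + ξ • e := by rw [hθs]; abel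
    have nx := norm_add_sq_real (x - θs) (ξ • e)
    have ny := norm_add_sq_real (y - θs) (ξ • e)
    rw [hx, hy, nx, ny, h]
    have ix : ⟪x - θs, ξ • e⟫ = ξ * ⟪x - θs, e⟫ := real_inner_smul_right _ _ _
    have iy : ⟪y - θs, ξ • e⟫ = ξ * ⟪y - θs, e⟫ := real_inner_smul_right _ _ _
    have ixy : ⟪x - y, e⟫ = ⟪x - θs, e⟫ - ⟪y - θs, e⟫ := by
      rw [← inner_sub_left]; congr 1; abel
    rw [ix, iy, ixy]; ring
  have strict : ∀ x y : EuclideanSpace ℝ (Fin m), ‖x - θs‖ = ‖y - θs‖ →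
      ‖x - θ‖ ≠ ‖y - θ‖ → 0 < (q x * p y - q y * p x) * ⟪x - y, e⟫ := by
    intro x y h hne
    rcases lt_or_gt_of_ne hne with hlt | hgt
    · have h1 : q x * p y - q y * p x < 0 := by
        have := h_rmlrp x y hlt; nlinarith
      have h2 : ⟪x - y, e⟫ < 0 := by
        have hk := key x y h
        have : ‖x - θ‖ ^ 2 < ‖y - θ‖ ^ 2 := by
          exact pow_lt_pow_left₀ hlt (norm_nonneg _) two_ne_zero
        nlinarith
      exact mul_pos_of_neg_of_neg h1 h2
    · have h1 : 0 < q x * p y - q y * p x := by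
        have := h_rmlrp y x hgt; nlinarith
      have h2 : 0 < ⟪x - y, e⟫ := by
        have hk := key x y h
        have : ‖y - θ‖ ^ 2 < ‖x - θ‖ ^ 2 := by
          exact pow_lt_pow_left₀ hgt (norm_nonneg _) two_ne_zero
        nlinarith
      exact mul_pos h1 h2
  refine ⟨strict, fun x y h => ?_⟩
  by_cases hne : ‖x - θ‖ = ‖y - θ‖
  · have hk := key x y h
    have : ⟪x - y, e⟫ = 0 := by rw [hne] at hk; nlinarith
    simp [this]
  · exact (strict x y h hne).le
end

section
/- Fix m ≥ 2 and θ ∈ ℝ^m. Let p, q : ℝ^m → ℝ be continuous, everywhere strictly positive functions such that p satisfies the strict RMLRP with respect to q at θ. Fix a unit vector e ∈ ℝ^m, ξ > 0, r > 0, set θ^s = θ + ξ·e, and let σ denote the rotation-invariant surface measure on the sphere S = {x ∈ ℝ^m : ‖x − θ^s‖ = r}. Then ∫_S ∫_S q(x)·p(y)·⟨x − y, e⟩ dσ(x) dσ(y) > 0 (positivity of the double surface integral H(θ^s, θ) in Step 4 of the proof of Lemma 1). -/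
open MeasureTheory
open scoped RealInnerProductSpace

open Metric Set Module
open scoped ENNReal NNReal

set_option maxHeartbeats 1000000

variable {m : ℕ}

local notation "Em" => EuclideanSpace ℝ (Fin m)

lemma norm_orth_add (v w : Em) (hv : ‖v‖ = 1) (hw : ⟪v, w⟫ = 0)
    (t : ℝ) : ‖w + t • v‖ ^ 2 = ‖w‖ ^ 2 + t ^ 2 := by
  rw [norm_add_sq_real, real_inner_smul_right, real_inner_comm, hw, norm_smul, hv]
  simp [mul_pow, sq_abs]

lemma sqrt_lip {a b lo : ℝ} (hlo : 0 < lo) (ha : lo ≤ a) (hb : lo ≤ b) :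
    |Real.sqrt a - Real.sqrt b| ≤ |a - b| / (2 * Real.sqrt lo) := by
  have ha0 : 0 ≤ a := hlo.le.trans ha
  have hb0 : 0 ≤ b := hlo.le.trans hb
  have hsa : Real.sqrt lo ≤ Real.sqrt a := Real.sqrt_le_sqrt ha
  have hsb : Real.sqrt lo ≤ Real.sqrt b := Real.sqrt_le_sqrt hb
  have hslo : 0 < Real.sqrt lo := Real.sqrt_pos.2 hlo
  have key : (Real.sqrt a - Real.sqrt b) * (Real.sqrt a + Real.sqrt b) = a - b := by
    nlinarith [Real.sq_sqrt ha0, Real.sq_sqrt hb0]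
  rw [le_div_iff₀ (by positivity)]
  calc |Real.sqrt a - Real.sqrt b| * (2 * Real.sqrt lo)
      ≤ |Real.sqrt a - Real.sqrt b| * (Real.sqrt a + Real.sqrt b) := by
        apply mul_le_mul_of_nonneg_left (by linarith) (abs_nonneg _)
    _ = |a - b| := by
        rw [← abs_of_nonneg (by positivity : (0:ℝ) ≤ Real.sqrt a + Real.sqrt b), ← abs_mul, key]

/-- Pure real arithmetic: Lipschitz bound for `n ↦ √(r² − n²)` away from the rim. -/
lemma sqrt_diff_bound {r mr n1 n2 nd : ℝ} (hr : 0 < r) (hmr : 0 < mr) (hmrr : mr ≤ r)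
    (h1 : n1 ^ 2 ≤ r ^ 2 - mr ^ 2) (h2 : n2 ^ 2 ≤ r ^ 2 - mr ^ 2)
    (h1' : 0 ≤ n1) (h2' : 0 ≤ n2) (hd : |n1 - n2| ≤ nd) :
    |Real.sqrt (r ^ 2 - n1 ^ 2) - Real.sqrt (r ^ 2 - n2 ^ 2)| ≤ (r / mr) * nd := by
  have hb1 : n1 ≤ r := by nlinarith
  have hb2 : n2 ≤ r := by nlinarith
  have hnd : 0 ≤ nd := (abs_nonneg _).trans hd
  have hsq : |Real.sqrt (r ^ 2 - n1 ^ 2) - Real.sqrt (r ^ 2 - n2 ^ 2)| ≤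
      |(r ^ 2 - n1 ^ 2) - (r ^ 2 - n2 ^ 2)| / (2 * Real.sqrt (mr ^ 2)) :=
    sqrt_lip (by positivity) (by linarith) (by linarith)
  rw [Real.sqrt_sq hmr.le] at hsq
  refine hsq.trans ?_
  rw [div_le_iff₀ (by positivity)]
  have habs : |(r ^ 2 - n1 ^ 2) - (r ^ 2 - n2 ^ 2)| ≤ 2 * r * nd := by
    have : (r ^ 2 - n1 ^ 2) - (r ^ 2 - n2 ^ 2) = (n2 + n1) * (n2 - n1) := by ring
    rw [this, abs_mul, abs_of_nonneg (by linarith)]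
    have h7 : |n2 - n1| ≤ nd := by rwa [abs_sub_comm]
    nlinarith [abs_nonneg (n2 - n1)]
  refine habs.trans ?_
  have heq : r / mr * nd * (2 * mr) = 2 * r * nd := by field_simp
  exact heq.ge

lemma finrank_orth (hm : 1 ≤ m) {v : Em} (hv : ‖v‖ = 1) :
    ((finrank ℝ ((ℝ ∙ v)ᗮ : Submodule ℝ Em)) : ℝ) = (m : ℝ) - 1 := by
  haveI : Fact (finrank ℝ Em = (m - 1) + 1) := ⟨by simp [Nat.sub_add_cancel hm]⟩
  have hv0 : v ≠ 0 := by intro h; rw [h] at hv; simp at hv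
  rw [Submodule.finrank_orthogonal_span_singleton (n := m - 1) hv0]
  push_cast [hm]
  ring

lemma cap_finite (hm : 1 ≤ m) (c : Em) (r : ℝ) (hr : 0 < r)
    (v : Em) (hv : ‖v‖ = 1) :
    μH[(m : ℝ) - 1] {x : Em | x ∈ sphere c r ∧ r / m ≤ ⟪v, x - c⟫} < ⊤ := by
  set W : Submodule ℝ Em := (ℝ ∙ v)ᗮ with hW
  have hd0 : (0:ℝ) ≤ (m : ℝ) - 1 := by
    have : (1:ℝ) ≤ (m:ℝ) := by exact_mod_cast hm
    linarith
  have hm0 : (0:ℝ) < (m:ℝ) := by exact_mod_cast Nat.lt_of_lt_of_le Nat.zero_lt_one hm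
  have hm1 : (1:ℝ) ≤ (m:ℝ) := by exact_mod_cast hm
  have hrm : 0 < r / m := div_pos hr hm0
  set g : W → Em := fun w => c + (w : Em) + Real.sqrt (r ^ 2 - ‖(w : Em)‖ ^ 2) • v with hg
  set s : Set W := {w | ‖(w : Em)‖ ^ 2 ≤ r ^ 2 - (r / m) ^ 2} with hs
  have hsub : {x : Em | x ∈ sphere c r ∧ r / m ≤ ⟪v, x - c⟫} ⊆ g '' s := by
    rintro x ⟨hx, ht⟩
    rw [mem_sphere, dist_eq_norm] at hx
    set t : ℝ := ⟪v, x - c⟫ with htdef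
    have ht0 : 0 ≤ t := hrm.le.trans ht
    have hw0 : ⟪v, (x - c) - t • v⟫ = 0 := by
      rw [inner_sub_right, real_inner_smul_right, real_inner_self_eq_norm_sq, hv]
      ring
    have hdecomp : ((x - c) - t • v) + t • v = x - c := by abel
    have hnorm : ‖((x - c) - t • v) + t • v‖ ^ 2 = ‖(x - c) - t • v‖ ^ 2 + t ^ 2 :=
      norm_orth_add v _ hv hw0 t
    rw [hdecomp, hx] at hnorm
    have ht2 : (r / m) ^ 2 ≤ t ^ 2 := pow_le_pow_left₀ hrm.le ht 2
    refine ⟨⟨(x - c) - t • v, Submodule.mem_orthogonal_singleton_iff_inner_right.2 hw0⟩, ?_, ?_⟩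
    · simp only [hs, mem_setOf_eq]
      linarith
    · have hteq : r ^ 2 - ‖(x - c) - t • v‖ ^ 2 = t ^ 2 := by linarith
      simp only [hg]
      rw [hteq, Real.sqrt_sq ht0]
      abel
  have hlip : LipschitzOnWith ((m : ℝ≥0) + 1) g s := by
    rw [lipschitzOnWith_iff_dist_le_mul]
    intro w1 h1 w2 h2
    simp only [hs, mem_setOf_eq] at h1 h2
    have hdd : dist w1 w2 = ‖(w1 : Em) - (w2 : Em)‖ := by
      rw [Subtype.dist_eq, dist_eq_norm]
    have hst := sqrt_diff_bound (n1 := ‖(w1 : Em)‖) (n2 := ‖(w2 : Em)‖)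
      (nd := ‖(w1 : Em) - (w2 : Em)‖) hr hrm (div_le_self hr.le hm1)
      h1 h2 (norm_nonneg _) (norm_nonneg _) (abs_norm_sub_norm_le _ _)
    have hrmm : r / (r / m) = m := by field_simp
    rw [hrmm] at hst
    have hgd : g w1 - g w2 = ((w1 : Em) - (w2 : Em)) +
        (Real.sqrt (r ^ 2 - ‖(w1 : Em)‖ ^ 2) - Real.sqrt (r ^ 2 - ‖(w2 : Em)‖ ^ 2)) • v := by
      simp only [hg]
      rw [sub_smul]
      abel
    rw [dist_eq_norm, hgd, hdd]
    calc ‖((w1 : Em) - (w2 : Em)) +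
        (Real.sqrt (r ^ 2 - ‖(w1 : Em)‖ ^ 2) - Real.sqrt (r ^ 2 - ‖(w2 : Em)‖ ^ 2)) • v‖
        ≤ ‖(w1 : Em) - (w2 : Em)‖ +
          |Real.sqrt (r ^ 2 - ‖(w1 : Em)‖ ^ 2) - Real.sqrt (r ^ 2 - ‖(w2 : Em)‖ ^ 2)| := by
          refine (norm_add_le _ _).trans ?_
          rw [norm_smul, hv, Real.norm_eq_abs, mul_one]
      _ ≤ (((m : ℝ≥0) + 1) : ℝ) * ‖(w1 : Em) - (w2 : Em)‖ := by
          push_cast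
          nlinarith [norm_nonneg ((w1 : Em) - (w2 : Em))]
  have h1 : μH[(m : ℝ) - 1] (g '' s) ≤
      (((m : ℝ≥0) + 1) : ℝ≥0∞) ^ ((m:ℝ)-1) * μH[(m : ℝ) - 1] s :=
    hlip.hausdorffMeasure_image_le hd0
  have h2 : μH[(m : ℝ) - 1] s ≤ μH[(m : ℝ) - 1] (closedBall (0 : W) r) := by
    apply measure_mono
    intro w hw
    simp only [hs, mem_setOf_eq] at hw
    rw [mem_closedBall, dist_zero_right]
    have h6 : ‖w‖ = ‖(w : Em)‖ := rfl
    rw [h6]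
    nlinarith [norm_nonneg (w : Em), hrm]
  have h3 : μH[(m : ℝ) - 1] (closedBall (0 : W) r) < ⊤ := by
    rw [← finrank_orth hm hv]
    exact (isCompact_closedBall (0 : W) r).measure_lt_top
  calc μH[(m : ℝ) - 1] {x : Em | x ∈ sphere c r ∧ r / m ≤ ⟪v, x - c⟫}
      ≤ μH[(m : ℝ) - 1] (g '' s) := measure_mono hsub
    _ ≤ (((m : ℝ≥0) + 1) : ℝ≥0∞) ^ ((m:ℝ)-1) * μH[(m : ℝ) - 1] s := h1
    _ < ⊤ := ENNReal.mul_lt_top (ENNReal.rpow_lt_top_of_nonneg hd0 ENNReal.coe_ne_top)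
        (h2.trans_lt h3)

lemma sphere_hausdorff_finite (hm : 1 ≤ m) (c : Em) (r : ℝ) (hr : 0 < r) :
    μH[(m : ℝ) - 1] (sphere c r) < ⊤ := by
  haveI : Nonempty (Fin m) := ⟨⟨0, hm⟩⟩
  have hm0 : (0:ℝ) < (m:ℝ) := by exact_mod_cast Nat.lt_of_lt_of_le Nat.zero_lt_one hm
  set v : Fin m × Bool → Em :=
    fun p => (if p.2 then (1:ℝ) else -1) • EuclideanSpace.single p.1 (1:ℝ) with hvdef
  have hvnorm : ∀ p, ‖v p‖ = 1 := by
    intro p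
    rw [hvdef]
    rw [norm_smul, EuclideanSpace.norm_single]
    cases p.2 <;> simp
  have hcover : sphere c r ⊆
      ⋃ p : Fin m × Bool, {x : Em | x ∈ sphere c r ∧ r / m ≤ ⟪v p, x - c⟫} := by
    intro x hx
    have hxnorm : ‖x - c‖ = r := by rwa [mem_sphere, dist_eq_norm] at hx
    have hkey : ∃ i : Fin m, r / m ≤ |(x - c) i| := by
      by_contra hcon
      push_neg at hcon
      have hsum : ‖x - c‖ ^ 2 = ∑ i, ((x - c) i) ^ 2 := by
        rw [EuclideanSpace.norm_eq]
        rw [Real.sq_sqrt (Finset.sum_nonneg fun i _ => sq_nonneg _)]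
        simp [Real.norm_eq_abs, sq_abs]
      have hlt : ∑ i, ((x - c) i) ^ 2 < ∑ _i : Fin m, (r / m) ^ 2 := by
        apply Finset.sum_lt_sum_of_nonempty Finset.univ_nonempty
        intro i _
        calc ((x - c) i) ^ 2 = |(x - c) i| ^ 2 := (sq_abs _).symm
          _ < (r / m) ^ 2 := by
              apply pow_lt_pow_left₀ (hcon i) (abs_nonneg _)
              norm_num
      rw [Finset.sum_const, Finset.card_univ, Fintype.card_fin, nsmul_eq_mul] at hlt
      rw [hxnorm] at hsum
      have hm1 : (1:ℝ) ≤ (m:ℝ) := by exact_mod_cast hm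
      have h9 : (m : ℝ) * (r / m) ^ 2 = r ^ 2 / m := by field_simp
      rw [h9] at hlt
      have h10 : r ^ 2 / (m:ℝ) ≤ r ^ 2 := div_le_self (sq_nonneg r) hm1
      linarith
    obtain ⟨i, hi⟩ := hkey
    rcases le_or_gt 0 ((x - c) i) with hpos | hneg
    · refine mem_iUnion.2 ⟨(i, true), hx, ?_⟩
      have hv1 : v (i, true) = EuclideanSpace.single i (1:ℝ) := by simp [hvdef]
      rw [hv1, EuclideanSpace.inner_single_left]
      simp only [map_one, one_mul]
      rwa [abs_of_nonneg hpos] at hi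
    · refine mem_iUnion.2 ⟨(i, false), hx, ?_⟩
      have hv1 : v (i, false) = (-1 : ℝ) • EuclideanSpace.single i (1:ℝ) := by simp [hvdef]
      rw [hv1, real_inner_smul_left, EuclideanSpace.inner_single_left]
      simp only [map_one, one_mul]
      rw [abs_of_neg hneg] at hi
      linarith
  refine (measure_mono hcover).trans_lt ?_
  refine (measure_iUnion_le _).trans_lt ?_
  rw [tsum_fintype]
  exact ENNReal.sum_lt_top.2 fun p _ => cap_finite hm c r hr (v p) (hvnorm p)

lemma cap_pos (hm : 1 ≤ m) (c : Em) (r : ℝ) (hr : 0 < r) (v : Em) (hv : ‖v‖ = 1) :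
    0 < μH[(m : ℝ) - 1] (sphere c r ∩ ball (c + r • v) r) := by
  have hd0 : (0:ℝ) ≤ (m : ℝ) - 1 := by
    have : (1:ℝ) ≤ (m:ℝ) := by exact_mod_cast hm
    linarith
  set W : Submodule ℝ Em := (ℝ ∙ v)ᗮ with hW
  have hvW : v ∈ Wᗮ := by
    rw [Submodule.mem_orthogonal]
    intro u hu
    rw [real_inner_comm]
    exact Submodule.mem_orthogonal_singleton_iff_inner_right.1 hu
  set P := W.orthogonalProjectionOnto with hP
  have hPv : P v = 0 := Submodule.orthogonalProjectionOnto_apply_of_mem_orthogonal hvW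
  have hlip : LipschitzWith 1 (fun x : Em => P x) := by
    have h := (P : Em →L[ℝ] W).lipschitz
    refine h.weaken ?_
    have h2 := Submodule.orthogonalProjectionOnto_norm_le W
    rw [← NNReal.coe_le_coe]
    simpa using h2
  have hball : ball (P c) (r / 3) ⊆ (fun x : Em => P x) '' (sphere c r ∩ ball (c + r • v) r) := by
    intro u hu
    rw [mem_ball] at hu
    set w : W := u - P c with hwdef
    have hwn : ‖(w : Em)‖ < r / 3 := by
      have : ‖w‖ = dist u (P c) := by rw [dist_eq_norm]
      rw [← this] at hu
      exact hu
    have hwr : ‖(w : Em)‖ ≤ r := by linarith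
    have hw0 : ⟪v, (w : Em)⟫ = 0 :=
      Submodule.mem_orthogonal_singleton_iff_inner_right.1 w.2
    set t : ℝ := Real.sqrt (r ^ 2 - ‖(w : Em)‖ ^ 2) with htdef
    have hsq : 0 ≤ r ^ 2 - ‖(w : Em)‖ ^ 2 := by nlinarith [norm_nonneg (w : Em)]
    have ht2 : t ^ 2 = r ^ 2 - ‖(w : Em)‖ ^ 2 := Real.sq_sqrt hsq
    have ht0 : 0 ≤ t := Real.sqrt_nonneg _
    have htr : t ≤ r := by nlinarith
    refine ⟨c + (w : Em) + t • v, ⟨?_, ?_⟩, ?_⟩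
    · rw [mem_sphere, dist_eq_norm]
      have h5 : c + (w : Em) + t • v - c = (w : Em) + t • v := by abel
      rw [h5]
      have h6 : ‖(w : Em) + t • v‖ ^ 2 = r ^ 2 := by
        rw [norm_orth_add v (w : Em) hv hw0 t]; linarith
      rw [← Real.sqrt_sq (norm_nonneg ((w : Em) + t • v)), h6, Real.sqrt_sq hr.le]
    · rw [mem_ball, dist_eq_norm]
      have h5 : c + (w : Em) + t • v - (c + r • v) = (w : Em) + (t - r) • v := by
        rw [sub_smul]; abel
      rw [h5]
      have h7 : r - t ≤ ‖(w : Em)‖ := by nlinarith [norm_nonneg (w : Em)]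
      calc ‖(w : Em) + (t - r) • v‖ ≤ ‖(w : Em)‖ + ‖(t - r) • v‖ := norm_add_le _ _
        _ = ‖(w : Em)‖ + |t - r| := by rw [norm_smul, hv, Real.norm_eq_abs, mul_one]
        _ = ‖(w : Em)‖ + (r - t) := by rw [abs_of_nonpos (by linarith), neg_sub]
        _ < r := by linarith
    · have h8 : P ((w : Em)) = w := Submodule.orthogonalProjectionOnto_mem_subspace_eq_self w
      have h9 : P (t • v) = 0 := by rw [_root_.map_smul, hPv, smul_zero]
      simp only [map_add, h8, h9, add_zero]
      rw [hwdef]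
      abel
  have h0 : 0 < μH[(m : ℝ) - 1] (ball (P c) (r / 3)) := by
    rw [← finrank_orth hm hv]
    exact Metric.isOpen_ball.measure_pos _ (nonempty_ball.2 (by positivity))
  have h1 : μH[(m : ℝ) - 1] (ball (P c) (r / 3)) ≤
      μH[(m : ℝ) - 1] ((fun x : Em => P x) '' (sphere c r ∩ ball (c + r • v) r)) :=
    measure_mono hball
  have h2 := hlip.hausdorffMeasure_image_le hd0 (sphere c r ∩ ball (c + r • v) r)
  have h3 : ((1 : ℝ≥0) : ℝ≥0∞) ^ ((m:ℝ) - 1) = 1 := by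
    rw [ENNReal.coe_one, ENNReal.one_rpow]
  rw [h3, one_mul] at h2
  exact lt_of_lt_of_le h0 (h1.trans h2)

/-- **Step 4 of the proof of Lemma 1 (positivity of the double surface integral
`H(θˢ, θ)`).** Let `p` satisfy the strict radial MLRP with respect to `q` at `θ`,
with `p`, `q` continuous and everywhere positive, and let `θˢ = θ + ξ·e` with `e`
a unit vector and `ξ > 0`. Then the double integral of `q(x)p(y)⟪x − y, e⟫` over
the sphere of radius `r > 0` centered at `θˢ` (with respect to the
rotation-invariant surface measure, i.e. the `(m−1)`-dimensional Hausdorff measure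
restricted to the sphere) is strictly positive. -/
theorem double_surface_integral_positive
    (m : ℕ) (hm : 2 ≤ m)
    (θ : EuclideanSpace ℝ (Fin m))
    (p q : EuclideanSpace ℝ (Fin m) → ℝ)
    (hp_cont : Continuous p) (hq_cont : Continuous q)
    (hp_pos : ∀ x, 0 < p x) (hq_pos : ∀ x, 0 < q x)
    (h_rmlrp : ∀ x y : EuclideanSpace ℝ (Fin m),
      ‖x - θ‖ < ‖y - θ‖ → p y * q x < p x * q y)
    (e : EuclideanSpace ℝ (Fin m)) (he : ‖e‖ = 1)
    (ξ : ℝ) (hξ : 0 < ξ) (r : ℝ) (hr : 0 < r)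
    (θs : EuclideanSpace ℝ (Fin m)) (hθs : θs = θ + ξ • e) :
    0 < ∫ y in Metric.sphere θs r, ∫ x in Metric.sphere θs r,
        q x * p y * ⟪x - y, e⟫ ∂(μH[(m : ℝ) - 1]) ∂(μH[(m : ℝ) - 1]) := by
  have hm1 : 1 ≤ m := le_trans (by norm_num) hm
  set S : Set (EuclideanSpace ℝ (Fin m)) := Metric.sphere θs r with hSdef
  set σ : Measure (EuclideanSpace ℝ (Fin m)) := μH[(m : ℝ) - 1].restrict S with hσdef
  have hSmeas : MeasurableSet S := (Metric.isClosed_sphere).measurableSet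
  haveI hσfin : IsFiniteMeasure σ := by
    constructor
    rw [hσdef, Measure.restrict_apply_univ]
    exact sphere_hausdorff_finite hm1 θs r hr
  set ν : Measure (EuclideanSpace ℝ (Fin m) × EuclideanSpace ℝ (Fin m)) := σ.prod σ with hνdef
  set F : EuclideanSpace ℝ (Fin m) × EuclideanSpace ℝ (Fin m) → ℝ :=
    fun z => q z.2 * p z.1 * ⟪z.2 - z.1, e⟫ with hFdef
  have hFcont : Continuous F := by
    apply Continuous.mul
    · exact (hq_cont.comp continuous_snd).mul (hp_cont.comp continuous_fst)
    · exact Continuous.inner (continuous_snd.sub continuous_fst) continuous_const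
  -- geometric identity
  have hgeo : ∀ a : EuclideanSpace ℝ (Fin m), a ∈ S →
      ‖a - θ‖ ^ 2 = r ^ 2 + 2 * ξ * ⟪a - θs, e⟫ + ξ ^ 2 := by
    intro a ha
    have h2 : a - θ = (a - θs) + ξ • e := by rw [hθs]; abel
    rw [h2, norm_add_sq_real, real_inner_smul_right, norm_smul, Real.norm_eq_abs]
    have h3 : ‖a - θs‖ = r := by
      rw [hSdef] at ha; rwa [Metric.mem_sphere, dist_eq_norm] at ha
    rw [h3, he, mul_one, sq_abs]
    ring
  -- pointwise sign of symmetrized integrand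
  have hkey : ∀ z : EuclideanSpace ℝ (Fin m) × EuclideanSpace ℝ (Fin m),
      z ∈ S ×ˢ S → 0 ≤ F z + F z.swap ∧ (⟪z.2 - z.1, e⟫ ≠ 0 → 0 < F z + F z.swap) := by
    rintro ⟨y, x⟩ ⟨hy, hx⟩
    simp only [hFdef, Prod.swap_prod_mk]
    have hsym : ⟪y - x, e⟫ = -⟪x - y, e⟫ := by rw [← inner_neg_left, neg_sub]
    have hcomb : q x * p y * ⟪x - y, e⟫ + q y * p x * ⟪y - x, e⟫ =
        (q x * p y - q y * p x) * ⟪x - y, e⟫ := by rw [hsym]; ring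
    have hdiff : ‖x - θ‖ ^ 2 - ‖y - θ‖ ^ 2 = 2 * ξ * ⟪x - y, e⟫ := by
      have h4 : ⟪x - y, e⟫ = ⟪x - θs, e⟫ - ⟪y - θs, e⟫ := by
        rw [← inner_sub_left]
        congr 1
        abel
      rw [hgeo x hx, hgeo y hy, h4]
      ring
    have hmain : ⟪x - y, e⟫ ≠ 0 → 0 < (q x * p y - q y * p x) * ⟪x - y, e⟫ := by
      intro hne
      rcases lt_or_gt_of_ne hne with hlt | hgt
      · -- ⟪x-y,e⟫ < 0 : ‖x-θ‖ < ‖y-θ‖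
        have h5 : ‖x - θ‖ ^ 2 < ‖y - θ‖ ^ 2 := by nlinarith
        have h6 : ‖x - θ‖ < ‖y - θ‖ := lt_of_pow_lt_pow_left₀ 2 (norm_nonneg _) h5
        have h7 := h_rmlrp x y h6
        apply mul_pos_of_neg_of_neg _ hlt
        linarith
      · have h5 : ‖y - θ‖ ^ 2 < ‖x - θ‖ ^ 2 := by nlinarith
        have h6 : ‖y - θ‖ < ‖x - θ‖ := lt_of_pow_lt_pow_left₀ 2 (norm_nonneg _) h5
        have h7 := h_rmlrp y x h6
        apply mul_pos _ hgt
        linarith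
    constructor
    · rw [hcomb]
      rcases eq_or_ne (⟪x - y, e⟫) 0 with h0 | h0
      · rw [h0, mul_zero]
      · exact (hmain h0).le
    · intro hne
      rw [hcomb]
      exact hmain hne
  -- integrability
  have hcomp : IsCompact (S ×ˢ S) := (isCompact_sphere θs r).prod (isCompact_sphere θs r)
  obtain ⟨C, hC⟩ := hcomp.exists_bound_of_continuousOn hFcont.continuousOn
  have hScompl : σ Sᶜ = 0 := by
    rw [hσdef, Measure.restrict_apply hSmeas.compl]
    simp
  have hae : ∀ᵐ z ∂ν, z ∈ S ×ˢ S := by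
    rw [ae_iff]
    have hsubc : {z : EuclideanSpace ℝ (Fin m) × EuclideanSpace ℝ (Fin m) | ¬ z ∈ S ×ˢ S} ⊆
        (Sᶜ ×ˢ (Set.univ : Set (EuclideanSpace ℝ (Fin m)))) ∪
        ((Set.univ : Set (EuclideanSpace ℝ (Fin m))) ×ˢ Sᶜ) := by
      rintro ⟨a, b⟩ hz
      simp only [Set.mem_setOf_eq, Set.mem_prod, not_and_or] at hz
      rcases hz with h | h
      · exact Or.inl ⟨h, Set.mem_univ _⟩
      · exact Or.inr ⟨Set.mem_univ _, h⟩
    refine measure_mono_null hsubc (measure_union_null ?_ ?_)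
    · rw [hνdef, Measure.prod_prod, hScompl, zero_mul]
    · rw [hνdef, Measure.prod_prod, hScompl, mul_zero]
  have hFint : Integrable F ν := by
    refine ⟨hFcont.aestronglyMeasurable, ?_⟩
    apply MeasureTheory.HasFiniteIntegral.of_bounded (C := C)
    filter_upwards [hae] with z hz using hC z hz
  have hFswapcont : Continuous (fun z : EuclideanSpace ℝ (Fin m) × EuclideanSpace ℝ (Fin m) => F z.swap) :=
    hFcont.comp continuous_swap
  have hFswapint : Integrable (fun z => F z.swap) ν := by
    refine ⟨hFswapcont.aestronglyMeasurable, ?_⟩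
    apply MeasureTheory.HasFiniteIntegral.of_bounded (C := C)
    filter_upwards [hae] with z hz
    exact hC z.swap (by exact ⟨hz.2, hz.1⟩)
  have hGint : Integrable (fun z => F z + F z.swap) ν := hFint.add hFswapint
  -- swap invariance
  have hswapmeas : ν.map Prod.swap = ν := by rw [hνdef]; exact Measure.prod_swap
  have hswapeq : ∫ z, F z.swap ∂ν = ∫ z, F z ∂ν := by
    have h := MeasureTheory.integral_map (φ := Prod.swap) measurable_swap.aemeasurable
      (f := F) (by rw [hswapmeas]; exact hFcont.aestronglyMeasurable)
    rw [hswapmeas] at h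
    exact h.symm
  -- positivity of symmetrized integral
  have hGae : 0 ≤ᵐ[ν] fun z => F z + F z.swap := by
    filter_upwards [hae] with z hz using (hkey z hz).1
  have hGpos : 0 < ∫ z, F z + F z.swap ∂ν := by
    rw [MeasureTheory.integral_pos_iff_support_of_nonneg_ae hGae hGint]
    set A : Set (EuclideanSpace ℝ (Fin m)) := Metric.ball (θs + r • e) r with hAdef
    set B : Set (EuclideanSpace ℝ (Fin m)) := Metric.ball (θs + r • (-e)) r with hBdef
    have hsub : (S ∩ B) ×ˢ (S ∩ A) ⊆ Function.support (fun z => F z + F z.swap) := by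
      rintro ⟨y, x⟩ ⟨⟨hyS, hyB⟩, hxS, hxA⟩
      have hxpos : 0 < ⟪x - θs, e⟫ := by
        have h8 : ⟪x - θs, e⟫ = ⟪x - (θs + r • e), e⟫ + r := by
          simp only [sub_add_eq_sub_sub, inner_sub_left, real_inner_smul_left,
            real_inner_self_eq_norm_sq, he]
          ring
        have h9 : |⟪x - (θs + r • e), e⟫| ≤ ‖x - (θs + r • e)‖ := by
          calc |⟪x - (θs + r • e), e⟫| ≤ ‖x - (θs + r • e)‖ * ‖e‖ := abs_real_inner_le_norm _ _
            _ = ‖x - (θs + r • e)‖ := by rw [he, mul_one]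
        have h10 : ‖x - (θs + r • e)‖ < r := by
          rw [hAdef] at hxA; rwa [Metric.mem_ball, dist_eq_norm] at hxA
        have := abs_le.1 h9
        linarith
      have hyneg : ⟪y - θs, e⟫ < 0 := by
        have h8 : ⟪y - θs, e⟫ = ⟪y - (θs + r • (-e)), e⟫ - r := by
          simp only [sub_add_eq_sub_sub, smul_neg, sub_neg_eq_add, inner_add_left,
            inner_sub_left, inner_neg_left, real_inner_smul_left,
            real_inner_self_eq_norm_sq, he]
          ring
        have h9 : |⟪y - (θs + r • (-e)), e⟫| ≤ ‖y - (θs + r • (-e))‖ := by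
          calc |⟪y - (θs + r • (-e)), e⟫| ≤ ‖y - (θs + r • (-e))‖ * ‖e‖ := abs_real_inner_le_norm _ _
            _ = ‖y - (θs + r • (-e))‖ := by rw [he, mul_one]
        have h10 : ‖y - (θs + r • (-e))‖ < r := by
          rw [hBdef] at hyB; rwa [Metric.mem_ball, dist_eq_norm] at hyB
        have := abs_le.1 h9
        linarith
      have hinner : ⟪x - y, e⟫ > 0 := by
        have h4 : ⟪x - y, e⟫ = ⟪x - θs, e⟫ - ⟪y - θs, e⟫ := by
          rw [← inner_sub_left]; congr 1; abel
        rw [h4]; linarith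
      have := (hkey (y, x) ⟨hyS, hxS⟩).2 (by simpa using hinner.ne')
      exact Function.mem_support.2 this.ne'
    have hmeas : ν ((S ∩ B) ×ˢ (S ∩ A)) = σ (S ∩ B) * σ (S ∩ A) := by
      rw [hνdef]; exact Measure.prod_prod _ _
    have hA : 0 < σ (S ∩ A) := by
      rw [hσdef, Measure.restrict_apply (hSmeas.inter Metric.isOpen_ball.measurableSet),
        Set.inter_eq_left.2 Set.inter_subset_left]
      exact cap_pos hm1 θs r hr e he
    have hB : 0 < σ (S ∩ B) := by
      rw [hσdef, Measure.restrict_apply (hSmeas.inter Metric.isOpen_ball.measurableSet),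
        Set.inter_eq_left.2 Set.inter_subset_left]
      exact cap_pos hm1 θs r hr (-e) (by rw [norm_neg, he])
    calc (0 : ℝ≥0∞) < σ (S ∩ B) * σ (S ∩ A) := ENNReal.mul_pos hB.ne' hA.ne'
      _ = ν ((S ∩ B) ×ˢ (S ∩ A)) := hmeas.symm
      _ ≤ ν (Function.support (fun z => F z + F z.swap)) := measure_mono hsub
  -- assemble
  have hsum : ∫ z, F z + F z.swap ∂ν = 2 * ∫ z, F z ∂ν := by
    rw [MeasureTheory.integral_add hFint hFswapint, hswapeq]; ring
  have hFpos : 0 < ∫ z, F z ∂ν := by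
    rw [hsum] at hGpos; linarith
  have hrepr : ∫ z, F z ∂ν = ∫ y in S, ∫ x in S,
      q x * p y * ⟪x - y, e⟫ ∂(μH[(m : ℝ) - 1]) ∂(μH[(m : ℝ) - 1]) := by
    rw [hνdef, MeasureTheory.integral_prod F hFint]
  rwa [hrepr] at hFpos
end

section
/- Fix m ≥ 1 and θ ∈ ℝ^m. Let p, q : ℝ^m → ℝ be measurable, everywhere strictly positive probability densities, each radially symmetric at θ, such that p satisfies the strict RMLRP with respect to q at θ. Then there exists T ∈ (0, ∞) such that p(x) > q(x) for every x with ‖x − θ‖ < T and p(x) < q(x) for every x with ‖x − θ‖ > T (single-crossing property of a strict-RMLRP pair of radially symmetric densities, used in the proof of Theorem 2). -/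
open MeasureTheory

/-- **Single-crossing property (used in the proof of Theorem 2).** If `p` and `q`
are everywhere-positive probability densities on `ℝ^m`, each radially symmetric at
`θ`, and `p` satisfies the strict radial MLRP with respect to `q` at `θ`, then
there is a radius `T ∈ (0, ∞)` such that `p > q` strictly inside radius `T` and
`p < q` strictly outside radius `T`. -/
theorem rmlrp_single_crossing
    (m : ℕ) (hm : 1 ≤ m)
    (θ : EuclideanSpace ℝ (Fin m))
    (p q : EuclideanSpace ℝ (Fin m) → ℝ)
    (hp_meas : Measurable p) (hq_meas : Measurable q)
    (hp_pos : ∀ x, 0 < p x) (hq_pos : ∀ x, 0 < q x)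
    (hp_int : (∫ x : EuclideanSpace ℝ (Fin m), p x) = 1)
    (hq_int : (∫ x : EuclideanSpace ℝ (Fin m), q x) = 1)
    (hp_radial : ∀ x y : EuclideanSpace ℝ (Fin m), ‖x - θ‖ = ‖y - θ‖ → p x = p y)
    (hq_radial : ∀ x y : EuclideanSpace ℝ (Fin m), ‖x - θ‖ = ‖y - θ‖ → q x = q y)
    (h_rmlrp : ∀ x y : EuclideanSpace ℝ (Fin m),
      ‖x - θ‖ < ‖y - θ‖ → p y * q x < p x * q y) :
    ∃ T : ℝ, 0 < T ∧
      (∀ x : EuclideanSpace ℝ (Fin m), ‖x - θ‖ < T → q x < p x) ∧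
      (∀ x : EuclideanSpace ℝ (Fin m), T < ‖x - θ‖ → p x < q x) := by
  haveI : Nonempty (Fin m) := ⟨⟨0, hm⟩⟩

  -- integrability
  have hpI : Integrable p (volume : Measure (EuclideanSpace ℝ (Fin m))) := by
    by_contra h
    rw [integral_undef h] at hp_int
    exact one_ne_zero hp_int.symm
  have hqI : Integrable q (volume : Measure (EuclideanSpace ℝ (Fin m))) := by
    by_contra h
    rw [integral_undef h] at hq_int
    exact one_ne_zero hq_int.symm
  -- there is a point away from θ where p ≥ q
  have exA : ∃ x : EuclideanSpace ℝ (Fin m), q x ≤ p x ∧ x ≠ θ := by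
    by_contra h
    push_neg at h
    have hle : p ≤ᵐ[(volume : Measure (EuclideanSpace ℝ (Fin m)))] q := by
      have hθ : ∀ᵐ x : EuclideanSpace ℝ (Fin m) ∂volume, x ≠ θ := by
        have : (volume : Measure (EuclideanSpace ℝ (Fin m))) {θ} = 0 := measure_singleton θ
        exact (ae_iff).2 (by simpa using this)
      filter_upwards [hθ] with x hx
      by_contra hc
      push_neg at hc
      exact hx (h x hc.le)
    have heq : p =ᵐ[(volume : Measure (EuclideanSpace ℝ (Fin m)))] q := by
      have := (integral_eq_iff_of_ae_le hpI hqI hle).1 (by rw [hp_int, hq_int])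
      exact this
    have hθ : ∀ᵐ x : EuclideanSpace ℝ (Fin m) ∂volume, x ≠ θ := by
      have : (volume : Measure (EuclideanSpace ℝ (Fin m))) {θ} = 0 := measure_singleton θ
      exact (ae_iff).2 (by simpa using this)
    obtain ⟨x, hx1, hx2⟩ := (heq.and hθ).exists
    have : p x < q x := by
      by_contra hc
      push_neg at hc
      exact hx2 (h x hc)
    exact absurd hx1 this.ne
  -- there is a point where p ≤ q
  have exB : ∃ y : EuclideanSpace ℝ (Fin m), p y ≤ q y := by
    by_contra h
    push_neg at h
    have hle : q ≤ᵐ[(volume : Measure (EuclideanSpace ℝ (Fin m)))] p :=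
      Filter.Eventually.of_forall fun x => (h x).le
    have heq : q =ᵐ[(volume : Measure (EuclideanSpace ℝ (Fin m)))] p :=
      (integral_eq_iff_of_ae_le hqI hpI hle).1 (by rw [hp_int, hq_int])
    obtain ⟨x, hx⟩ := heq.exists
    exact absurd hx.symm (h x).ne'
  obtain ⟨a, ha, haθ⟩ := exA
  obtain ⟨b, hb⟩ := exB
  set S : Set ℝ := {r | ∃ x : EuclideanSpace ℝ (Fin m), ‖x - θ‖ = r ∧ q x ≤ p x} with hS
  have hSne : S.Nonempty := ⟨‖a - θ‖, a, rfl, ha⟩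
  have hSbdd : BddAbove S := by
    refine ⟨‖b - θ‖, fun r hr => ?_⟩
    obtain ⟨x, hxr, hx⟩ := hr
    subst hxr
    by_contra hc
    push_neg at hc
    have := h_rmlrp b x hc
    nlinarith [hp_pos x, hq_pos x, hp_pos b, hq_pos b]
  set T : ℝ := sSup S with hT
  have hTpos : 0 < T := by
    have h1 : ‖a - θ‖ ≤ T := le_csSup hSbdd ⟨a, rfl, ha⟩
    have h2 : 0 < ‖a - θ‖ := by
      rw [norm_pos_iff]
      exact sub_ne_zero.2 haθ
    linarith
  refine ⟨T, hTpos, ?_, ?_⟩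
  · intro x hx
    obtain ⟨r, hrS, hxr⟩ := exists_lt_of_lt_csSup hSne hx
    obtain ⟨z, hzr, hz⟩ := hrS
    have := h_rmlrp x z (by rw [hzr]; exact hxr)
    by_contra hc
    push_neg at hc
    nlinarith [hp_pos x, hq_pos x, hp_pos z, hq_pos z]
  · intro x hx
    by_contra hc
    push_neg at hc
    have : ‖x - θ‖ ∈ S := ⟨x, rfl, hc⟩
    exact absurd (le_csSup hSbdd this) (not_le.2 hx)
end

section
/- Fix m ≥ 1 and θ ∈ ℝ^m. Let f : ℝ^m → ℝ be a measurable function that is radially symmetric at θ and strictly radially decreasing from θ. Let p, q : ℝ^m → ℝ be measurable, everywhere strictly positive probability densities, each radially symmetric at θ, such that p satisfies the strict RMLRP with respect to q at θ, and suppose f·p and f·q are Lebesgue-integrable on ℝ^m. Then ∫_{ℝ^m} f(x) p(x) dx > ∫_{ℝ^m} f(x) q(x) dx (the expected value of a strictly radially decreasing function is strictly larger under the more concentrated density; the final step in the proof of Theorem 2). -/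
open MeasureTheory

/-- **Final step in the proof of Theorem 2.** If `f` is radially symmetric at `θ`
and strictly radially decreasing from `θ`, and `p`, `q` are everywhere-positive
radially symmetric probability densities with `p` satisfying the strict radial
MLRP with respect to `q` at `θ` (so `p` is more concentrated), then the expected
value of `f` is strictly larger under `p` than under `q`. -/
theorem radially_decreasing_expectation_gt
    (m : ℕ) (hm : 1 ≤ m)
    (θ : EuclideanSpace ℝ (Fin m))
    (f : EuclideanSpace ℝ (Fin m) → ℝ)
    (hf_meas : Measurable f)
    (hf_radial : ∀ x y : EuclideanSpace ℝ (Fin m), ‖x - θ‖ = ‖y - θ‖ → f x = f y)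
    (hf_dec : ∀ x y : EuclideanSpace ℝ (Fin m), ‖x - θ‖ < ‖y - θ‖ → f y < f x)
    (p q : EuclideanSpace ℝ (Fin m) → ℝ)
    (hp_meas : Measurable p) (hq_meas : Measurable q)
    (hp_pos : ∀ x, 0 < p x) (hq_pos : ∀ x, 0 < q x)
    (hp_int : (∫ x : EuclideanSpace ℝ (Fin m), p x) = 1)
    (hq_int : (∫ x : EuclideanSpace ℝ (Fin m), q x) = 1)
    (hp_radial : ∀ x y : EuclideanSpace ℝ (Fin m), ‖x - θ‖ = ‖y - θ‖ → p x = p y)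
    (hq_radial : ∀ x y : EuclideanSpace ℝ (Fin m), ‖x - θ‖ = ‖y - θ‖ → q x = q y)
    (h_rmlrp : ∀ x y : EuclideanSpace ℝ (Fin m),
      ‖x - θ‖ < ‖y - θ‖ → p y * q x < p x * q y)
    (hfp_int : Integrable (fun x => f x * p x))
    (hfq_int : Integrable (fun x => f x * q x)) :
    (∫ x : EuclideanSpace ℝ (Fin m), f x * q x) <
      ∫ x : EuclideanSpace ℝ (Fin m), f x * p x := by
  -- a unit vector
  have hFin : (0:ℕ) < m := hm
  set u : EuclideanSpace ℝ (Fin m) := EuclideanSpace.single ⟨0, hFin⟩ (1:ℝ) with hu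
  have hu_norm : ‖u‖ = 1 := by
    rw [hu, EuclideanSpace.norm_single]; norm_num
  -- points at any radius
  have hpt : ∀ r : ℝ, 0 ≤ r → ‖(θ + r • u) - θ‖ = r := by
    intro r hr
    have : (θ + r • u) - θ = r • u := by abel
    rw [this, norm_smul, Real.norm_eq_abs, abs_of_nonneg hr, hu_norm, mul_one]
  -- integrability of p and q
  have hp_i : Integrable p := by
    by_contra h
    rw [integral_undef h] at hp_int; norm_num at hp_int
  have hq_i : Integrable q := by
    by_contra h
    rw [integral_undef h] at hq_int; norm_num at hq_int
  -- Claim A : ∃ b, p b < q b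
  obtain ⟨b, hb⟩ : ∃ b, p b < q b := by
    by_contra h
    push_neg at h
    have hlt : ∀ y, q y < p y := by
      intro y
      set z := θ + (‖y - θ‖ + 1) • u with hz
      have hzn : ‖z - θ‖ = ‖y - θ‖ + 1 := hpt _ (by positivity)
      have h1 : ‖y - θ‖ < ‖z - θ‖ := by rw [hzn]; linarith
      have h2 := h_rmlrp y z h1
      have h3 : p y * q z ≤ p y * p z :=
        mul_le_mul_of_nonneg_left (h z) (le_of_lt (hp_pos y))
      have h4 : p z * q y < p z * p y := by nlinarith
      exact lt_of_mul_lt_mul_left h4 (le_of_lt (hp_pos z))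
    have h0 : (∫ x, (p x - q x)) = 0 := by
      rw [integral_sub hp_i hq_i, hp_int, hq_int]; ring
    have hpos : 0 < ∫ x, (p x - q x) := by
      have hint2 : Integrable (fun x => p x - q x) := hp_i.sub hq_i
      have hnn2 : 0 ≤ (fun x => p x - q x) := by
        intro x; simp only [Pi.zero_apply]; linarith [hlt x]
      rw [integral_pos_iff_support_of_nonneg hnn2 hint2]
      have hsupp : Function.support (fun x => p x - q x) = Set.univ := by
        ext x
        simp only [Function.mem_support, Set.mem_univ, iff_true]
        have := hlt x; intro hc; linarith
      rw [hsupp]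
      exact isOpen_univ.measure_pos volume ⟨θ, trivial⟩
    linarith
  -- Claim B : ∃ a, q a < p a
  obtain ⟨a, ha⟩ : ∃ a, q a < p a := by
    by_contra h
    push_neg at h
    have hlt : ∀ y, y ≠ θ → p y < q y := by
      intro y hy
      have h1 : ‖θ - θ‖ < ‖y - θ‖ := by
        simp only [sub_self, norm_zero]
        exact norm_pos_iff.mpr (sub_ne_zero.mpr hy)
      have h2 := h_rmlrp θ y h1
      have h3 : p θ * q y ≤ q θ * q y :=
        mul_le_mul_of_nonneg_right (h θ) (le_of_lt (hq_pos y))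
      have h4 : q θ * p y < q θ * q y := by nlinarith
      exact lt_of_mul_lt_mul_left h4 (le_of_lt (hq_pos θ))
    have h0 : (∫ x, (q x - p x)) = 0 := by
      rw [integral_sub hq_i hp_i, hp_int, hq_int]; ring
    have hpos : 0 < ∫ x, (q x - p x) := by
      have hint2 : Integrable (fun x => q x - p x) := hq_i.sub hp_i
      have hnn2 : 0 ≤ (fun x => q x - p x) := by
        intro x; simp only [Pi.zero_apply]
        by_cases hx : x = θ
        · rw [hx]; linarith [h θ]
        · linarith [hlt x hx]
      rw [integral_pos_iff_support_of_nonneg hnn2 hint2]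
      refine lt_of_lt_of_le ?_ (measure_mono (?_ : {θ}ᶜ ⊆ Function.support fun x => q x - p x))
      · refine isOpen_compl_singleton.measure_pos volume ⟨θ + u, ?_⟩
        simp only [Set.mem_compl_iff, Set.mem_singleton_iff]
        intro hc
        have : ‖(θ + (1:ℝ) • u) - θ‖ = 1 := hpt 1 (by norm_num)
        rw [one_smul] at this
        rw [hc] at this
        simp at this
      · intro x hx
        simp only [Set.mem_compl_iff, Set.mem_singleton_iff] at hx
        simp only [Function.mem_support]
        have := hlt x hx; intro hc; linarith
    linarith
  -- key ordering lemma
  have hkey : ∀ x y, p x < q x → q y ≤ p y → ‖y - θ‖ < ‖x - θ‖ := by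
    intro x y hx hy
    rcases lt_trichotomy ‖y - θ‖ ‖x - θ‖ with h | h | h
    · exact h
    · exfalso
      have hpxy := hp_radial x y h.symm
      have hqxy := hq_radial x y h.symm
      rw [hpxy, hqxy] at hx; linarith
    · exfalso
      have h2 := h_rmlrp x y h
      nlinarith [hq_pos x, hq_pos y, hp_pos x, hp_pos y]
  -- the threshold c
  set B : Set (EuclideanSpace ℝ (Fin m)) := {x | p x < q x} with hB
  have hbB : b ∈ B := hb
  have hBne : (f '' B).Nonempty := ⟨f b, b, hbB, rfl⟩
  have hBbdd : BddAbove (f '' B) := by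
    refine ⟨f a, ?_⟩
    rintro v ⟨x, hx, rfl⟩
    have := hkey x a hx (le_of_lt ha)
    exact le_of_lt (hf_dec a x this)
  set c : ℝ := sSup (f '' B) with hc
  -- pointwise nonnegativity
  have hnn : ∀ x, 0 ≤ (f x - c) * (p x - q x) := by
    intro x
    rcases lt_trichotomy (p x) (q x) with h | h | h
    · have hfx : f x ≤ c := le_csSup hBbdd ⟨x, h, rfl⟩
      nlinarith
    · rw [h]; simp
    · have hfx : c ≤ f x := by
        refine csSup_le hBne ?_
        rintro v ⟨y, hy, rfl⟩
        have := hkey y x hy (le_of_lt h)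
        exact le_of_lt (hf_dec x y this)
      exact mul_nonneg (by linarith) (by linarith)
  -- integrability of the product
  have hint : Integrable (fun x => (f x - c) * (p x - q x)) := by
    have heq : (fun x => (f x - c) * (p x - q x))
        = fun x => (f x * p x - f x * q x) - (c * p x - c * q x) := by
      funext x; ring
    rw [heq]
    exact (hfp_int.sub hfq_int).sub ((hp_i.const_mul c).sub (hq_i.const_mul c))
  -- strict positivity on the exterior of a ball
  have hT : ∀ y, ‖b - θ‖ < ‖y - θ‖ → 0 < (f y - c) * (p y - q y) := by
    intro y hy
    have h2 := h_rmlrp b y hy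
    have hpy : p y < q y := by nlinarith [hq_pos b, hq_pos y, hp_pos y]
    have hfb : f b ≤ c := le_csSup hBbdd ⟨b, hbB, rfl⟩
    have hfy : f y < f b := hf_dec b y hy
    exact mul_pos_of_neg_of_neg (by linarith) (by linarith)
  -- the integral is positive
  have hpos : 0 < ∫ x, (f x - c) * (p x - q x) := by
    have hnn2 : 0 ≤ (fun x => (f x - c) * (p x - q x)) := by
      intro x; simpa using hnn x
    rw [integral_pos_iff_support_of_nonneg hnn2 hint]
    refine lt_of_lt_of_le ?_ (measure_mono
      (?_ : {y | ‖b - θ‖ < ‖y - θ‖} ⊆ Function.support fun x => (f x - c) * (p x - q x)))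
    · have hopen : IsOpen {y : EuclideanSpace ℝ (Fin m) | ‖b - θ‖ < ‖y - θ‖} := by
        have : Continuous fun y : EuclideanSpace ℝ (Fin m) => ‖y - θ‖ :=
          (continuous_id.sub continuous_const).norm
        exact isOpen_lt continuous_const this
      refine hopen.measure_pos volume ⟨θ + (‖b - θ‖ + 1) • u, ?_⟩
      simp only [Set.mem_setOf_eq]
      rw [hpt _ (by positivity)]
      linarith
    · intro y hy
      simp only [Set.mem_setOf_eq] at hy
      simp only [Function.mem_support]
      exact ne_of_gt (hT y hy)
  -- compute the integral
  have hval : (∫ x, (f x - c) * (p x - q x))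
      = (∫ x, f x * p x) - (∫ x, f x * q x) := by
    have heq : (fun x => (f x - c) * (p x - q x))
        = fun x => (f x * p x - f x * q x) - (c * p x - c * q x) := by
      funext x; ring
    have i1 : Integrable (fun x => f x * p x - f x * q x) := hfp_int.sub hfq_int
    have icp : Integrable (fun x => c * p x) := hp_i.const_mul c
    have icq : Integrable (fun x => c * q x) := hq_i.const_mul c
    have i2 : Integrable (fun x => c * p x - c * q x) := icp.sub icq
    rw [heq, integral_sub i1 i2, integral_sub hfp_int hfq_int,
      integral_sub icp icq, integral_const_mul, integral_const_mul, hp_int, hq_int]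
    ring
  rw [hval] at hpos
  linarith
end
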